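/- arXiv:2112.04996 — 5 statements merged into one kernel-verified Lean document; each statement's English description precedes it below -/
import Mathlib

section
/- Let h ≥ 1 and k ≥ 0 with k + 1 ≤ h, and let λ be a multiset of nonnegative integers of cardinality k + 1 whose sum is h − (k + 1). Then |S_h(λ)| · ∏_p n_p! = k! · h, where the product is over the distinct values p occurring in λ and n_p is the multiplicity of p in λ. -/
/-- The set of positive integers `m` such that `d + m ∈ D` in `ZMod h`. -/
def gapSet (h : ℕ) (D : Finset (ZMod h)) (d : ZMod h) : Set ℕ :=
  {m : ℕ | 0 < m ∧ d + (m : ZMod h) ∈ D}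

/-- The gap of `D` at `d`: one less than the least positive `m` with `d + m ∈ D`. -/
noncomputable def gap (h : ℕ) (D : Finset (ZMod h)) (d : ZMod h) : ℕ :=
  sInf (gapSet h D d) - 1

/-- The gap multiset of `D`. -/
noncomputable def gapMultiset (h : ℕ) (D : Finset (ZMod h)) : Multiset ℕ :=
  D.val.map (gap h D)

/-- `S_h(λ)`: subsets of `ZMod h` whose gap multiset equals `λ`. -/
def Sh (h : ℕ) (lam : Multiset ℕ) : Set (Finset (ZMod h)) :=
  {D | gapMultiset h D = lam}

set_option linter.unusedSectionVars false

/-! ### partial sums -/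

def psum (l : List ℕ) (i : ℕ) : ℕ := (l.take i).sum + i

lemma psum_zero (l : List ℕ) : psum l 0 = 0 := by simp [psum]

lemma psum_succ (l : List ℕ) (i : ℕ) (hi : i < l.length) :
    psum l (i + 1) = psum l i + l[i] + 1 := by
  simp [psum, List.sum_take_succ l i hi]; omega

lemma psum_lt_psum (l : List ℕ) {i j : ℕ} (hij : i < j) (hj : j ≤ l.length) :
    psum l i < psum l j := by
  induction j with
  | zero => omega
  | succ n ih =>
    have hn : n < l.length := hj
    rcases Nat.lt_succ_iff_lt_or_eq.1 hij with hlt | rfl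
    · exact (ih hlt hn.le).trans_le (by rw [psum_succ l n hn]; omega)
    · rw [psum_succ l i hn]; omega

lemma psum_le_psum (l : List ℕ) {i j : ℕ} (hij : i ≤ j) (hj : j ≤ l.length) :
    psum l i ≤ psum l j := by
  rcases Nat.eq_or_lt_of_le hij with rfl | hlt
  · exact le_rfl
  · exact (psum_lt_psum l hlt hj).le

lemma psum_length (l : List ℕ) : psum l l.length = l.sum + l.length := by
  simp [psum]

/-! ### build -/

def build (h : ℕ) (d : ZMod h) (l : List ℕ) : Finset (ZMod h) :=
  (Finset.range l.length).image (fun i => d + (psum l i : ZMod h))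

section
variable {h : ℕ} [NeZero h] {d : ZMod h} {l : List ℕ}

lemma mem_build {e : ZMod h} :
    e ∈ build h d l ↔ ∃ i < l.length, e = d + (psum l i : ZMod h) := by
  simp [build, Finset.mem_image, Finset.mem_range, eq_comm]

lemma cast_psum_inj (hl : l.sum + l.length = h) {i j : ℕ}
    (hi : i < l.length) (hj : j < l.length)
    (hcast : ((psum l i : ℕ) : ZMod h) = ((psum l j : ℕ) : ZMod h)) : i = j := by
  have hih : psum l i < h := by
    have := psum_lt_psum l hi le_rfl
    rw [psum_length, hl] at this; exact this
  have hjh : psum l j < h := by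
    have := psum_lt_psum l hj le_rfl
    rw [psum_length, hl] at this; exact this
  have : psum l i = psum l j := by
    have := congrArg ZMod.val hcast
    rwa [ZMod.val_cast_of_lt hih, ZMod.val_cast_of_lt hjh] at this
  by_contra hne
  rcases Nat.lt_or_ge i j with hij | hij
  · exact absurd this (psum_lt_psum l hij hj.le).ne
  · have : j < i := by omega
    exact absurd ‹psum l i = psum l j› (psum_lt_psum l this hi.le).ne'

lemma build_injOn (hl : l.sum + l.length = h) :
    Set.InjOn (fun i => d + (psum l i : ZMod h)) (Finset.range l.length) := by
  intro i hi j hj hij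
  simp only [Finset.coe_range, Set.mem_Iio] at hi hj
  exact cast_psum_inj hl hi hj (by simpa using hij)

lemma card_build (hl : l.sum + l.length = h) : (build h d l).card = l.length := by
  rw [build, Finset.card_image_of_injOn (build_injOn hl), Finset.card_range]

lemma sInf_gapSet_build (hl : l.sum + l.length = h) {i : ℕ} (hi : i < l.length) :
    sInf (gapSet h (build h d l) (d + (psum l i : ZMod h))) = l[i] + 1 := by
  have hmem : l[i] + 1 ∈ gapSet h (build h d l) (d + (psum l i : ZMod h)) := by
    constructor
    · omega
    · have hcast : d + ((psum l i : ℕ) : ZMod h) + ((l[i] + 1 : ℕ) : ZMod h)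
          = d + ((psum l (i + 1) : ℕ) : ZMod h) := by
        rw [psum_succ l i hi]; push_cast; ring
      rw [hcast]
      rcases Nat.lt_or_ge (i + 1) l.length with hlt | hge
      · exact mem_build.2 ⟨i + 1, hlt, rfl⟩
      · have : i + 1 = l.length := by omega
        have : psum l (i + 1) = h := by rw [this, psum_length, hl]
        rw [this]
        simp only [ZMod.natCast_self, add_zero]
        exact mem_build.2 ⟨0, by omega, by simp [psum_zero]⟩
  refine le_antisymm (Nat.sInf_le hmem) (le_csInf ⟨_, hmem⟩ ?_)
  rintro m ⟨hm0, hmD⟩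
  by_contra hlt
  push_neg at hlt
  obtain ⟨j, hj, hje⟩ := mem_build.1 hmD
  have hsucc : psum l i + m < psum l (i + 1) := by
    rw [psum_succ l i hi]; omega
  have hile : psum l (i + 1) ≤ h := by
    have := psum_length l; 
    rcases Nat.lt_or_ge (i+1) l.length with hlt' | hge
    · have := psum_lt_psum l hlt' le_rfl; rw [psum_length, hl] at this; omega
    · have : i + 1 = l.length := by omega
      rw [this, psum_length, hl]
  have him : psum l i + m < h := by omega
  have hjlt : psum l j < h := by
    have := psum_lt_psum l hj le_rfl; rwa [psum_length, hl] at this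
  have hcast : ((psum l i + m : ℕ) : ZMod h) = ((psum l j : ℕ) : ZMod h) := by
    have : d + ((psum l i : ℕ) : ZMod h) + ((m : ℕ) : ZMod h)
        = d + ((psum l j : ℕ) : ZMod h) := hje
    push_cast at this ⊢
    linear_combination this
  have heqn : psum l i + m = psum l j := by
    have := congrArg ZMod.val hcast
    rwa [ZMod.val_cast_of_lt him, ZMod.val_cast_of_lt hjlt] at this
  rcases Nat.lt_or_ge i j with hij | hij
  · have : psum l (i+1) ≤ psum l j := psum_le_psum l hij hj.le
    omega
  · have : psum l j ≤ psum l i := psum_le_psum l hij hi.le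
    omega

lemma gap_build (hl : l.sum + l.length = h) {i : ℕ} (hi : i < l.length) :
    gap h (build h d l) (d + (psum l i : ZMod h)) = l[i] := by
  rw [gap, sInf_gapSet_build hl hi]; omega

end

section
variable {h : ℕ} [NeZero h] {d : ZMod h} {l : List ℕ}

lemma gapMultiset_build (hl : l.sum + l.length = h) :
    gapMultiset h (build h d l) = (l : Multiset ℕ) := by
  have hval : (build h d l).val
      = (Finset.range l.length).val.map (fun i => d + (psum l i : ZMod h)) := by
    rw [build, Finset.image_val, Multiset.dedup_eq_self.2]
    exact Multiset.Nodup.map_on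
      (fun i hi j hj hij => build_injOn hl (by simpa using hi) (by simpa using hj) hij)
      (Finset.range l.length).nodup
  rw [gapMultiset, hval, Multiset.map_map]
  have : ∀ i ∈ (Finset.range l.length).val,
      (gap h (build h d l) ∘ fun i => d + (psum l i : ZMod h)) i = l.getD i 0 := by
    intro i hi
    have hi' : i < l.length := by simpa using hi
    simp only [Function.comp_apply, gap_build hl hi', List.getD_eq_getElem l 0 hi']
  rw [Multiset.map_congr rfl this]
  have hrange : (Finset.range l.length).val = ((List.range l.length : List ℕ) : Multiset ℕ) := rfl
  rw [hrange, Multiset.map_coe, Multiset.coe_eq_coe]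
  apply List.Perm.of_eq
  apply List.ext_getElem (by simp)
  intro i h1 h2
  simp only [List.getElem_map, List.getElem_range]
  exact List.getD_eq_getElem l 0 h2

lemma build_ext (hl : l.sum + l.length = h) {l' : List ℕ} (hl' : l'.sum + l'.length = h)
    (hlen : l.length = l'.length) (heq : build h d l = build h d l') : l = l' := by
  have key : ∀ i, i ≤ l.length → psum l i = psum l' i ∧
      ∀ (hi : i < l.length), l[i] = l'[i]'(hlen ▸ hi) := by
    intro i
    induction i with
    | zero =>
      refine fun _ => ⟨by simp [psum_zero], fun hi => ?_⟩
      have e1 := gap_build (d := d) hl hi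
      have e2 := gap_build (d := d) hl' (hlen ▸ hi)
      rw [psum_zero] at e1 e2
      rw [← e1, ← e2, heq]
    | succ n ih =>
      intro hle
      have hn : n < l.length := hle
      obtain ⟨hps, hget⟩ := ih hn.le
      have hg := hget hn
      constructor
      · rw [psum_succ l n hn, psum_succ l' n (hlen ▸ hn), hps, hg]
      · intro hi
        have e1 := gap_build (d := d) hl hi
        have e2 := gap_build (d := d) hl' (hlen ▸ hi)
        have : psum l (n+1) = psum l' (n+1) := by
          rw [psum_succ l n hn, psum_succ l' n (hlen ▸ hn), hps, hg]
        rw [← e1, ← e2, heq, this]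
  exact List.ext_getElem hlen (fun i h1 h2 => (key i h1.le).2 h1)

end

lemma build_surj {h : ℕ} [NeZero h] (D : Finset (ZMod h)) (d : ZMod h) (hd : d ∈ D) :
    ∃ l : List ℕ, l.sum + l.length = h ∧ l.length = D.card ∧ build h d l = D := by
  classical
  set δ : ZMod h → ℕ := fun e => (e - d).val with hδ
  have hδinj : Function.Injective δ := by
    intro a b hab
    have := ZMod.val_injective h hab
    exact sub_left_injective this
  set s : List ℕ := (D.image δ).sort (· ≤ ·) with hs
  have hlen : s.length = D.card := by
    rw [hs, Finset.length_sort, Finset.card_image_of_injective _ hδinj]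
  have hsorted : s.Pairwise (· < ·) := (Finset.sortedLT_sort _).pairwise
  have hmem : ∀ x : ℕ, x ∈ s ↔ x ∈ D.image δ := fun x => Finset.mem_sort _
  have hlth : ∀ x ∈ s, x < h := by
    intro x hx
    obtain ⟨e, _, rfl⟩ := Finset.mem_image.1 ((hmem x).1 hx)
    exact ZMod.val_lt _
  have h0mem : (0 : ℕ) ∈ s :=
    (hmem 0).2 (Finset.mem_image.2 ⟨d, hd, by simp [hδ]⟩)
  have hlen0 : 0 < s.length := List.length_pos_iff.2 (List.ne_nil_of_mem h0mem)
  have hmono : ∀ {i j : ℕ} (hi : i < s.length) (hj : j < s.length), i < j → s[i] < s[j] := by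
    intro i j hi hj hij
    exact hsorted.rel_get_of_lt (a := ⟨i, hi⟩) (b := ⟨j, hj⟩) hij
  have h0 : s[0]'hlen0 = 0 := by
    obtain ⟨j, hj, hj0⟩ := List.mem_iff_getElem.1 h0mem
    rcases Nat.eq_zero_or_pos j with rfl | hjpos
    · exact hj0
    · have := hmono hlen0 hj hjpos
      omega
  set f : ℕ → ℕ := fun i => (if i + 1 < s.length then s.getD (i + 1) 0 else h) - s.getD i 0 - 1
    with hf
  set l : List ℕ := (List.range s.length).map f with hl
  have hllen : l.length = s.length := by simp [hl]
  have hgetl : ∀ (i : ℕ) (hi : i < s.length), l[i]'(by omega) = f i := by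
    intro i hi
    simp [hl]
  have hpsum : ∀ i ≤ s.length, psum l i = if i < s.length then s.getD i 0 else h := by
    intro i
    induction i with
    | zero =>
      intro _
      rw [psum_zero, if_pos hlen0, List.getD_eq_getElem s 0 hlen0, h0]
    | succ n ih =>
      intro hle
      have hn : n < s.length := hle
      have hstep : psum l (n + 1) = psum l n + l[n]'(by omega) + 1 :=
        psum_succ l n (by omega)
      rw [hstep, ih hn.le, if_pos hn, hgetl n hn, hf]
      beta_reduce
      have hns : s.getD n 0 = s[n]'hn := List.getD_eq_getElem s 0 hn
      by_cases hn1 : n + 1 < s.length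
      · have hn1s : s.getD (n + 1) 0 = s[n + 1]'hn1 := List.getD_eq_getElem s 0 hn1
        have hlt' : s[n]'hn < s[n + 1]'hn1 := hmono hn hn1 (by omega)
        simp only [if_pos hn1]
        rw [hns, hn1s]
        omega
      · have hlt' : s[n]'hn < h := hlth _ (List.getElem_mem hn)
        simp only [if_neg hn1]
        rw [hns]
        omega
  have hsuml : l.sum + l.length = h := by
    have := hpsum s.length le_rfl
    rw [if_neg (lt_irrefl _), ← hllen, psum_length] at this
    omega
  refine ⟨l, hsuml, by omega, ?_⟩
  ext e
  rw [mem_build]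
  constructor
  · rintro ⟨i, hi, rfl⟩
    have hi' : i < s.length := by omega
    rw [hpsum i hi'.le, if_pos hi', List.getD_eq_getElem s 0 hi']
    have : s[i]'hi' ∈ D.image δ := (hmem _).1 (List.getElem_mem hi')
    obtain ⟨e', he', heq⟩ := Finset.mem_image.1 this
    rw [← heq]
    have : ((δ e' : ℕ) : ZMod h) = e' - d := ZMod.natCast_zmod_val (e' - d)
    rw [this]
    simpa using he'
  · intro he
    have : δ e ∈ s := (hmem _).2 (Finset.mem_image.2 ⟨e, he, rfl⟩)
    obtain ⟨i, hi, hie⟩ := List.mem_iff_getElem.1 this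
    refine ⟨i, by omega, ?_⟩
    rw [hpsum i hi.le, if_pos hi, List.getD_eq_getElem s 0 hi, hie]
    have : ((δ e : ℕ) : ZMod h) = e - d := ZMod.natCast_zmod_val (e - d)
    rw [this]
    ring

/-! ### counting lists with a given multiset -/

noncomputable def permFinset (lam : Multiset ℕ) : Finset (List ℕ) :=
  lam.toList.permutations.toFinset

lemma mem_permFinset {lam : Multiset ℕ} {l : List ℕ} :
    l ∈ permFinset lam ↔ (l : Multiset ℕ) = lam := by
  rw [permFinset, List.mem_toFinset, List.mem_permutations, ← Multiset.coe_eq_coe,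
    Multiset.coe_toList]

lemma prod_fact_erase (lam : Multiset ℕ) (a : ℕ) (ha : a ∈ lam) :
    (∏ p ∈ lam.toFinset, (lam.count p).factorial)
      = lam.count a * ∏ p ∈ (lam.erase a).toFinset, ((lam.erase a).count p).factorial := by
  classical
  have hsub : (lam.erase a).toFinset ⊆ lam.toFinset := by
    intro p hp
    rw [Multiset.mem_toFinset] at hp ⊢
    exact Multiset.mem_of_mem_erase hp
  have hQ : (∏ p ∈ (lam.erase a).toFinset, ((lam.erase a).count p).factorial)
      = ∏ p ∈ lam.toFinset, ((lam.erase a).count p).factorial := by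
    refine Finset.prod_subset hsub ?_
    intro p _ hp
    rw [Multiset.mem_toFinset, ← Multiset.count_pos] at hp
    push_neg at hp
    interval_cases h' : (lam.erase a).count p
    · rfl
  have haf : a ∈ lam.toFinset := Multiset.mem_toFinset.2 ha
  have hP : (∏ p ∈ lam.toFinset, (lam.count p).factorial)
      = (lam.count a).factorial * ∏ p ∈ lam.toFinset.erase a, (lam.count p).factorial :=
    (Finset.mul_prod_erase _ _ haf).symm
  have hQ2 : (∏ p ∈ lam.toFinset, ((lam.erase a).count p).factorial)
      = ((lam.erase a).count a).factorial
        * ∏ p ∈ lam.toFinset.erase a, ((lam.erase a).count p).factorial :=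
    (Finset.mul_prod_erase _ _ haf).symm
  have htail : (∏ p ∈ lam.toFinset.erase a, ((lam.erase a).count p).factorial)
      = ∏ p ∈ lam.toFinset.erase a, (lam.count p).factorial := by
    refine Finset.prod_congr rfl ?_
    intro p hp
    rw [Multiset.count_erase_of_ne (Finset.ne_of_mem_erase hp)]
  have hca : 0 < lam.count a := Multiset.count_pos.2 ha
  have hce : (lam.erase a).count a = lam.count a - 1 := Multiset.count_erase_self a lam
  rw [hQ, hQ2, htail, hce, hP]
  rw [← Nat.mul_assoc]
  congr 1
  obtain ⟨c, hc⟩ : ∃ c, lam.count a = c + 1 := ⟨lam.count a - 1, by omega⟩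
  rw [hc]
  simp [Nat.factorial_succ]

lemma permFinset_card (lam : Multiset ℕ) :
    (permFinset lam).card * ∏ p ∈ lam.toFinset, (lam.count p).factorial
      = (Multiset.card lam).factorial := by
  classical
  induction lam using Multiset.strongInductionOn with
  | ih lam ih =>
    rcases eq_or_ne lam 0 with rfl | hne
    · simp [permFinset]
    · have hdecomp : permFinset lam
          = lam.toFinset.biUnion (fun a => (permFinset (lam.erase a)).image (a :: ·)) := by
        ext l
        simp only [Finset.mem_biUnion, Finset.mem_image, mem_permFinset, Multiset.mem_toFinset]
        constructor
        · intro hl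
          have hlne : l ≠ [] := by
            rintro rfl
            exact hne (by simpa using hl.symm)
          obtain ⟨b, t, rfl⟩ := List.exists_cons_of_ne_nil hlne
          have hb : b ∈ lam := by
            rw [← hl]
            simp
          refine ⟨b, hb, t, ?_, rfl⟩
          rw [← hl]
          simp [Multiset.cons_coe]
        · rintro ⟨a, ha, t, ht, rfl⟩
          rw [← Multiset.cons_coe, ht, Multiset.cons_erase ha]
      have hdisj : ∀ a ∈ lam.toFinset, ∀ b ∈ lam.toFinset, a ≠ b →
          Disjoint ((permFinset (lam.erase a)).image (a :: ·))
            ((permFinset (lam.erase b)).image (b :: ·)) := by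
        intro a _ b _ hab
        rw [Finset.disjoint_left]
        rintro l hl1 hl2
        simp only [Finset.mem_image] at hl1 hl2
        obtain ⟨t1, _, rfl⟩ := hl1
        obtain ⟨t2, _, heq⟩ := hl2
        exact hab (by injection heq.symm)
      have hcard : (permFinset lam).card
          = ∑ a ∈ lam.toFinset, (permFinset (lam.erase a)).card := by
        rw [hdecomp, Finset.card_biUnion hdisj]
        refine Finset.sum_congr rfl ?_
        intro a _
        exact Finset.card_image_of_injective _ (fun x y hxy => by injection hxy)
      obtain ⟨n, hn⟩ : ∃ n, Multiset.card lam = n + 1 := by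
        refine ⟨Multiset.card lam - 1, ?_⟩
        have : 0 < Multiset.card lam := Multiset.card_pos.2 hne
        omega
      rw [hcard, Finset.sum_mul, hn]
      have hterm : ∀ a ∈ lam.toFinset,
          (permFinset (lam.erase a)).card * ∏ p ∈ lam.toFinset, (lam.count p).factorial
            = lam.count a * n.factorial := by
        intro a ha
        have ham : a ∈ lam := Multiset.mem_toFinset.1 ha
        have hlt : lam.erase a < lam := Multiset.erase_lt.2 ham
        have hcarde : Multiset.card (lam.erase a) = n := by
          rw [Multiset.card_erase_of_mem ham, hn]
          rfl
        rw [prod_fact_erase lam a ham, ← Nat.mul_assoc,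
          Nat.mul_comm ((permFinset (lam.erase a)).card) (lam.count a), Nat.mul_assoc,
          ih _ hlt, hcarde]
      rw [Finset.sum_congr rfl hterm, ← Finset.sum_mul, Multiset.toFinset_sum_count_eq, hn]
      rw [Nat.factorial_succ]

theorem stmt1 (h k : ℕ) (hh : 1 ≤ h) (hk : k + 1 ≤ h) (lam : Multiset ℕ)
    (hcard : Multiset.card lam = k + 1) (hsum : lam.sum = h - (k + 1)) :
    (Sh h lam).ncard * (∏ p ∈ lam.toFinset, Nat.factorial (lam.count p)) =
      Nat.factorial k * h := by
  classical
  haveI : NeZero h := ⟨by omega⟩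
  have hlcond : ∀ l : List ℕ, (l : Multiset ℕ) = lam →
      l.sum + l.length = h ∧ l.length = k + 1 := by
    intro l hl
    have h1 : l.length = k + 1 := by
      have := congrArg Multiset.card hl
      rw [Multiset.coe_card] at this
      omega
    have h2 : l.sum = h - (k + 1) := by
      have := congrArg Multiset.sum hl
      rw [Multiset.sum_coe] at this
      omega
    exact ⟨by omega, h1⟩
  set S : Finset (Finset (ZMod h)) :=
    Finset.univ.filter (fun D => gapMultiset h D = lam) with hS
  have hSh : (Sh h lam).ncard = S.card := by
    have : Sh h lam = ↑S := by
      ext D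
      simp [Sh, hS]
    rw [this, Set.ncard_coe_finset]
  set P : Finset (ZMod h × List ℕ) := Finset.univ ×ˢ permFinset lam with hP
  have hmem_P : ∀ x : ZMod h × List ℕ, x ∈ P ↔ (x.2 : Multiset ℕ) = lam := by
    intro x
    simp [hP, mem_permFinset]
  have hmapsto : ∀ x ∈ P, build h x.1 x.2 ∈ S := by
    intro x hx
    have hl := (hmem_P x).1 hx
    obtain ⟨hsum', _⟩ := hlcond _ hl
    simp only [hS, Finset.mem_filter, Finset.mem_univ, true_and]
    rw [gapMultiset_build hsum', hl]
  have hfiber : ∀ D ∈ S, (P.filter fun x => build h x.1 x.2 = D).card = k + 1 := by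
    intro D hDS
    have hD : gapMultiset h D = lam := by
      simpa [hS] using hDS
    have hDcard : D.card = k + 1 := by
      have := congrArg Multiset.card hD
      rw [gapMultiset, Multiset.card_map] at this
      simpa [hcard] using this
    rw [← hDcard]
    apply Finset.card_bij (fun x _ => x.1)
    · rintro ⟨d, l⟩ hx
      simp only [Finset.mem_filter] at hx
      obtain ⟨hxP, hxD⟩ := hx
      have hl := (hmem_P _).1 hxP
      dsimp only at hl
      obtain ⟨hsum', hlen'⟩ := hlcond _ hl
      have : d ∈ build h d l := by
        refine mem_build.2 ⟨0, by omega, ?_⟩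
        rw [psum_zero]
        simp
      rwa [hxD] at this
    · rintro ⟨d1, l1⟩ hx1 ⟨d2, l2⟩ hx2 heq
      simp only [Finset.mem_filter] at hx1 hx2
      obtain ⟨hxP1, hxD1⟩ := hx1
      obtain ⟨hxP2, hxD2⟩ := hx2
      simp only at heq
      subst heq
      have hm1 := (hmem_P _).1 hxP1
      have hm2 := (hmem_P _).1 hxP2
      dsimp only at hm1 hm2
      obtain ⟨hs1, hl1⟩ := hlcond _ hm1
      obtain ⟨hs2, hl2⟩ := hlcond _ hm2
      have : l1 = l2 := build_ext hs1 hs2 (by omega) (hxD1.trans hxD2.symm)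
      simp [this]
    · intro d hd
      obtain ⟨l, hsum', hlen', hbuild⟩ := build_surj D d hd
      have hl : (l : Multiset ℕ) = lam := by
        rw [← gapMultiset_build (d := d) hsum', hbuild, hD]
      refine ⟨(d, l), ?_, rfl⟩
      simp only [Finset.mem_filter]
      exact ⟨(hmem_P _).2 hl, hbuild⟩
  have hdouble : P.card = S.card * (k + 1) := by
    rw [Finset.card_eq_sum_card_fiberwise hmapsto, Finset.sum_congr rfl hfiber,
      Finset.sum_const, smul_eq_mul]
  have hPcard : P.card = h * (permFinset lam).card := by
    rw [hP, Finset.card_product, Finset.card_univ, ZMod.card]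
  have hN : (permFinset lam).card * ∏ p ∈ lam.toFinset, (lam.count p).factorial
      = (k + 1).factorial := by
    rw [permFinset_card lam, hcard]
  have key : (S.card * ∏ p ∈ lam.toFinset, (lam.count p).factorial) * (k + 1)
      = (k.factorial * h) * (k + 1) := by
    calc (S.card * ∏ p ∈ lam.toFinset, (lam.count p).factorial) * (k + 1)
        = (S.card * (k + 1)) * ∏ p ∈ lam.toFinset, (lam.count p).factorial := by ring
      _ = (h * (permFinset lam).card) * ∏ p ∈ lam.toFinset, (lam.count p).factorial := by
          rw [← hdouble, hPcard]
      _ = h * ((permFinset lam).card * ∏ p ∈ lam.toFinset, (lam.count p).factorial) := by ring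
      _ = h * (k + 1).factorial := by rw [hN]
      _ = (k.factorial * h) * (k + 1) := by rw [Nat.factorial_succ]; ring
  rw [hSh]
  exact Nat.eq_of_mul_eq_mul_right (by omega) key
end

section
/- Let h ≥ 1 and k ≥ 0 with k + 1 ≤ h, let λ be a multiset of nonnegative integers of cardinality k + 1 whose sum is h − (k + 1), and fix an element d ∈ ZMod h. Then the number of subsets D ⊆ ZMod h with d ∈ D and gap multiset equal to λ, multiplied by ∏_p n_p!, equals (k + 1)!, where the product is over the distinct values p occurring in λ and n_p is the multiplicity of p in λ. -/
open Finset

def extg (n : ℕ) (g : Fin n → ℕ) : ℕ → ℕ := fun j => if hj : j < n then g ⟨j, hj⟩ else 0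

def psg (n : ℕ) (g : Fin n → ℕ) (m : ℕ) : ℕ := m + ∑ j ∈ Finset.range m, extg n g j

def phiD (h n : ℕ) (d : ZMod h) (g : Fin n → ℕ) : Finset (ZMod h) :=
  Finset.image (fun i : Fin n => d + ((psg n g i : ℕ) : ZMod h)) Finset.univ

lemma psg_zero (n : ℕ) (g : Fin n → ℕ) : psg n g 0 = 0 := by simp [psg]

lemma psg_succ (n : ℕ) (g : Fin n → ℕ) (m : ℕ) :
    psg n g (m + 1) = psg n g m + extg n g m + 1 := by
  simp [psg, Finset.sum_range_succ]; ring

lemma psg_mono (n : ℕ) (g : Fin n → ℕ) : StrictMono (psg n g) := by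
  apply strictMono_nat_of_lt_succ
  intro m
  rw [psg_succ]
  omega

section main
variable (h n : ℕ) (g : Fin n → ℕ) (d : ZMod h)

lemma psg_n (hnh : n ≤ h) (hsum : ∑ j ∈ Finset.range n, extg n g j = h - n) :
    psg n g n = h := by
  simp [psg, hsum]; omega

lemma psg_bound (hnh : n ≤ h) (hsum : ∑ j ∈ Finset.range n, extg n g j = h - n) :
    ∀ i ≤ n, psg n g i + (n - i) ≤ h := by
  intro i hi
  have h1 : psg n g i + (n - i) ≤ psg n g n := by
    have : ∑ j ∈ Finset.range i, extg n g j ≤ ∑ j ∈ Finset.range n, extg n g j :=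
      Finset.sum_le_sum_of_subset (Finset.range_subset_range.mpr hi)
    simp only [psg]; omega
  rw [psg_n h n g hnh hsum] at h1
  exact h1

lemma cast_inj_of_lt (hh : 0 < h) {x y : ℕ} (hx : x < h) (hy : y < h)
    (hxy : (x : ZMod h) = (y : ZMod h)) : x = y := by
  haveI : NeZero h := ⟨by omega⟩
  have := congrArg ZMod.val hxy
  rwa [ZMod.val_cast_of_lt hx, ZMod.val_cast_of_lt hy] at this

lemma sInf_gapSet_phi (hh : 0 < h) (hn : 0 < n) (hnh : n ≤ h)
    (hsum : ∑ j ∈ Finset.range n, extg n g j = h - n) (i : ℕ) (hi : i < n) :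
    sInf (gapSet h (phiD h n d g) (d + ((psg n g i : ℕ) : ZMod h))) = extg n g i + 1 := by
  haveI : NeZero h := ⟨by omega⟩
  have hbound := psg_bound h n g hnh hsum
  have hmem : (extg n g i + 1) ∈ gapSet h (phiD h n d g) (d + ((psg n g i : ℕ) : ZMod h)) := by
    constructor
    · omega
    · have : d + ((psg n g i : ℕ) : ZMod h) + ((extg n g i + 1 : ℕ) : ZMod h) =
          d + ((psg n g (i+1) : ℕ) : ZMod h) := by
        rw [psg_succ]; push_cast; ring
      rw [this]
      rcases Nat.lt_or_ge (i+1) n with hlt | hge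
      · exact Finset.mem_image.mpr ⟨⟨i+1, hlt⟩, Finset.mem_univ _, rfl⟩
      · have hin : i + 1 = n := by omega
        rw [hin, psg_n h n g hnh hsum]
        have : ((h : ℕ) : ZMod h) = ((0 : ℕ) : ZMod h) := by
          simp [ZMod.natCast_self]
        rw [this, ← psg_zero n g]
        exact Finset.mem_image.mpr ⟨⟨0, hn⟩, Finset.mem_univ _, rfl⟩
  have hlow : ∀ m ∈ gapSet h (phiD h n d g) (d + ((psg n g i : ℕ) : ZMod h)),
      extg n g i + 1 ≤ m := by
    rintro m ⟨hm0, hmD⟩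
    by_contra hcon
    push_neg at hcon
    have hmle : m ≤ extg n g i := by omega
    obtain ⟨j, _, hj⟩ := Finset.mem_image.mp hmD
    have hcast : ((psg n g i + m : ℕ) : ZMod h) = ((psg n g j : ℕ) : ZMod h) := by
      have := hj.symm
      push_cast at this ⊢
      rw [add_assoc] at this
      exact add_left_cancel this
    have hlt1 : psg n g i + m < h := by
      have h1 := hbound (i+1) (by omega)
      rw [psg_succ] at h1
      omega
    have hlt2 : psg n g j < h := by
      have := hbound j (le_of_lt j.isLt)
      have := j.isLt
      omega
    have heq : psg n g i + m = psg n g j := cast_inj_of_lt h hh hlt1 hlt2 hcast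
    rcases Nat.lt_or_ge (j : ℕ) (i+1) with hji | hji
    · have : psg n g j ≤ psg n g i := (psg_mono n g).monotone (by omega)
      omega
    · have : psg n g (i+1) ≤ psg n g j := (psg_mono n g).monotone hji
      rw [psg_succ] at this
      omega
  have hne : (gapSet h (phiD h n d g) (d + ((psg n g i : ℕ) : ZMod h))).Nonempty := ⟨_, hmem⟩
  have h1 := Nat.sInf_le hmem
  have h2 := hlow _ (Nat.sInf_mem hne)
  omega

lemma phiD_inj_on (hh : 0 < h) (hnh : n ≤ h)
    (hsum : ∑ j ∈ Finset.range n, extg n g j = h - n) :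
    Set.InjOn (fun i : Fin n => d + ((psg n g i : ℕ) : ZMod h)) Set.univ := by
  intro a _ b _ hab
  simp only at hab
  have h1 : ((psg n g a : ℕ) : ZMod h) = ((psg n g b : ℕ) : ZMod h) := add_left_cancel hab
  have hb := psg_bound h n g hnh hsum
  have ha' : psg n g a < h := by have := hb a (le_of_lt a.isLt); have := a.isLt; omega
  have hb' : psg n g b < h := by have := hb b (le_of_lt b.isLt); have := b.isLt; omega
  have := cast_inj_of_lt h hh ha' hb' h1
  exact Fin.ext ((psg_mono n g).injective this)

lemma phiD_val (hh : 0 < h) (hnh : n ≤ h)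
    (hsum : ∑ j ∈ Finset.range n, extg n g j = h - n) :
    (phiD h n d g).val =
      Finset.univ.val.map (fun i : Fin n => d + ((psg n g i : ℕ) : ZMod h)) := by
  exact Finset.image_val_of_injOn ((phiD_inj_on h n g d hh hnh hsum).mono (Set.subset_univ _))

lemma gapMultiset_phiD (hh : 0 < h) (hn : 0 < n) (hnh : n ≤ h)
    (hsum : ∑ j ∈ Finset.range n, extg n g j = h - n) :
    gapMultiset h (phiD h n d g) = Multiset.map g Finset.univ.val := by
  rw [gapMultiset, phiD_val h n g d hh hnh hsum, Multiset.map_map]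
  apply Multiset.map_congr rfl
  intro i _
  show gap h (phiD h n d g) (d + ((psg n g i : ℕ) : ZMod h)) = g i
  rw [gap, sInf_gapSet_phi h n g d hh hn hnh hsum i i.isLt]
  simp [extg, i.isLt]

lemma mem_phiD_self (hn : 0 < n) : d ∈ phiD h n d g := by
  apply Finset.mem_image.mpr ⟨⟨0, hn⟩, Finset.mem_univ _, ?_⟩
  simp [psg_zero]

end main

section inj
variable (h n : ℕ) (d : ZMod h)

lemma phiD_injective (hh : 0 < h) (hn : 0 < n) (hnh : n ≤ h) (g g' : Fin n → ℕ)
    (hs : ∑ j ∈ Finset.range n, extg n g j = h - n)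
    (hs' : ∑ j ∈ Finset.range n, extg n g' j = h - n)
    (heq : phiD h n d g = phiD h n d g') : g = g' := by
  have key : ∀ i, i ≤ n → psg n g i = psg n g' i := by
    intro i
    induction i with
    | zero => intro _; simp [psg_zero]
    | succ i ih =>
      intro hin
      have hi : i < n := by omega
      have hps := ih (by omega)
      have h1 : extg n g i + 1 = extg n g' i + 1 := by
        rw [← sInf_gapSet_phi h n g d hh hn hnh hs i hi,
          ← sInf_gapSet_phi h n g' d hh hn hnh hs' i hi, heq, hps]
      rw [psg_succ, psg_succ, hps]
      omega
  funext i
  have h1 := key i (le_of_lt i.isLt)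
  have h2 := key (i+1) i.isLt
  rw [psg_succ, psg_succ, h1] at h2
  have h3 : extg n g i = extg n g' i := by omega
  simpa [extg, i.isLt] using h3
end inj

noncomputable def nxtSeq (h : ℕ) (D : Finset (ZMod h)) (d : ZMod h) : ℕ → ZMod h
  | 0 => d
  | i+1 => nxtSeq h D d i + ((sInf (gapSet h D (nxtSeq h D d i)) : ℕ) : ZMod h)

section surj
variable (h : ℕ) (D : Finset (ZMod h)) (d : ZMod h)

lemma gapSet_nonempty (hh : 0 < h) (hd : d ∈ D) (e : ZMod h) :
    (gapSet h D e).Nonempty := by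
  haveI : NeZero h := ⟨by omega⟩
  by_cases hde : d = e
  · exact ⟨h, hh, by simp [ZMod.natCast_self, hde ▸ hd]⟩
  · refine ⟨(d - e).val, ?_, ?_⟩
    · rw [ZMod.val_pos]
      intro hcon
      exact hde (by rwa [sub_eq_zero] at hcon)
    · rw [ZMod.natCast_zmod_val]
      simpa using hd

lemma sInf_gapSet_spec (hh : 0 < h) (hd : d ∈ D) (e : ZMod h) :
    0 < sInf (gapSet h D e) ∧ e + ((sInf (gapSet h D e) : ℕ) : ZMod h) ∈ D :=
  Nat.sInf_mem (gapSet_nonempty h D d hh hd e)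

lemma nxtSeq_mem (hh : 0 < h) (hd : d ∈ D) (i : ℕ) : nxtSeq h D d i ∈ D := by
  induction i with
  | zero => exact hd
  | succ i ih => exact (sInf_gapSet_spec h D d hh hd (nxtSeq h D d i)).2

lemma nxt_inj (hh : 0 < h) (hd : d ∈ D) {e1 e2 : ZMod h} (he1 : e1 ∈ D) (he2 : e2 ∈ D)
    (heq : e1 + ((sInf (gapSet h D e1) : ℕ) : ZMod h) = e2 + ((sInf (gapSet h D e2) : ℕ) : ZMod h)) :
    e1 = e2 := by
  have aux : ∀ f1 f2 : ZMod h, f1 ∈ D →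
      sInf (gapSet h D f1) ≤ sInf (gapSet h D f2) →
      f1 + ((sInf (gapSet h D f1) : ℕ) : ZMod h) = f2 + ((sInf (gapSet h D f2) : ℕ) : ZMod h) →
      f1 = f2 := by
    intro f1 f2 hf1 hle heq2
    set m1 := sInf (gapSet h D f1) with hm1
    set m2 := sInf (gapSet h D f2) with hm2
    have hp1 := (sInf_gapSet_spec h D d hh hd f1).1
    have hp2 := (sInf_gapSet_spec h D d hh hd f2).1
    rcases eq_or_lt_of_le hle with heqm | hlt
    · rw [← heqm] at heq2
      exact add_right_cancel heq2
    · exfalso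
      have hmem : (m2 - m1) ∈ gapSet h D f2 := by
        constructor
        · omega
        · have : f2 + ((m2 - m1 : ℕ) : ZMod h) = f1 := by
            have : ((m2 : ℕ) : ZMod h) = ((m2 - m1 : ℕ) : ZMod h) + ((m1 : ℕ) : ZMod h) := by
              push_cast [Nat.cast_sub (le_of_lt hlt)]
              ring
            rw [this, ← add_assoc] at heq2
            exact (add_right_cancel heq2).symm
          rw [this]
          exact hf1
      have := Nat.sInf_le hmem
      omega
  rcases le_total (sInf (gapSet h D e1)) (sInf (gapSet h D e2)) with hle | hle
  · exact aux e1 e2 he1 hle heq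
  · exact (aux e2 e1 he2 hle heq.symm).symm

lemma nxtSeq_eq_add (hh : 0 < h) (hd : d ∈ D) (i : ℕ) :
    nxtSeq h D d i = d + ((∑ j ∈ Finset.range i, sInf (gapSet h D (nxtSeq h D d j)) : ℕ) : ZMod h) := by
  induction i with
  | zero => simp [nxtSeq]
  | succ i ih =>
    show nxtSeq h D d i + _ = _
    rw [Finset.sum_range_succ]
    push_cast at ih ⊢
    rw [← add_assoc, ← ih]
end surj

section surj2
variable (h : ℕ) (D : Finset (ZMod h)) (d : ZMod h)

lemma nxtSeq_injOn (hh : 0 < h) (hd : d ∈ D) (n : ℕ) (hcard : D.card = n)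
    (hgsum : ∑ e ∈ D, sInf (gapSet h D e) = h) :
    ∀ b, b < n → ∀ a, a < b → nxtSeq h D d a ≠ nxtSeq h D d b := by
  intro b
  induction b using Nat.strong_induction_on with
  | _ b IH =>
    intro hb a ha hEq
    rcases Nat.eq_zero_or_pos a with rfl | hapos
    · -- a = 0
      set t := ∑ j ∈ Finset.range b, sInf (gapSet h D (nxtSeq h D d j)) with ht
      have h0 : (d : ZMod h) = nxtSeq h D d b := hEq
      have hadd := nxtSeq_eq_add h D d hh hd b
      rw [← h0] at hadd
      have hcast : ((t : ℕ) : ZMod h) = 0 := by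
        have := hadd
        rw [left_eq_add] at this
        exact this
      have hdvd : h ∣ t := (ZMod.natCast_eq_zero_iff t h).mp hcast
      have hlow : b ≤ t := by
        calc b = ∑ _j ∈ Finset.range b, 1 := by simp
        _ ≤ t := Finset.sum_le_sum (fun j _ => (sInf_gapSet_spec h D d hh hd _).1)
      have hinj : Set.InjOn (nxtSeq h D d) ↑(Finset.range b) := by
        intro x hx y hy hxy
        simp only [Finset.coe_range, Set.mem_Iio] at hx hy
        rcases lt_trichotomy x y with hlt | heq2 | hlt
        · exact absurd hxy (IH y (by omega) (by omega) x hlt)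
        · exact heq2
        · exact absurd hxy.symm (IH x (by omega) (by omega) y hlt)
      set E := (Finset.range b).image (nxtSeq h D d) with hE
      have hEcard : E.card = b := by
        rw [hE, Finset.card_image_of_injOn hinj, Finset.card_range]
      have hEsub : E ⊆ D := by
        intro x hx
        obtain ⟨j, _, rfl⟩ := Finset.mem_image.mp hx
        exact nxtSeq_mem h D d hh hd j
      have hsumE : ∑ x ∈ E, sInf (gapSet h D x) = t := by
        rw [hE, Finset.sum_image hinj]
      have hsplit : ∑ x ∈ D \ E, sInf (gapSet h D x) + ∑ x ∈ E, sInf (gapSet h D x) = h := by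
        rw [Finset.sum_sdiff hEsub, hgsum]
      have hrest : D.card - E.card ≤ ∑ x ∈ D \ E, sInf (gapSet h D x) := by
        calc D.card - E.card = (D \ E).card := (Finset.card_sdiff_of_subset hEsub).symm
        _ = ∑ _x ∈ D \ E, 1 := by simp
        _ ≤ _ := Finset.sum_le_sum (fun x _ => (sInf_gapSet_spec h D d hh hd _).1)
      have hth : t < h := by omega
      have := Nat.le_of_dvd (by omega) hdvd
      omega
    · obtain ⟨a', rfl⟩ : ∃ a', a = a' + 1 := ⟨a - 1, by omega⟩
      obtain ⟨b', rfl⟩ : ∃ b', b = b' + 1 := ⟨b - 1, by omega⟩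
      have heq2 : nxtSeq h D d a' = nxtSeq h D d b' :=
        nxt_inj h D d hh hd (nxtSeq_mem h D d hh hd a') (nxtSeq_mem h D d hh hd b') hEq
      exact absurd heq2 (IH b' (by omega) (by omega) a' (by omega))

lemma phiD_surj (n : ℕ) (hh : 0 < h) (hn : 0 < n) (hnh : n ≤ h) (hd : d ∈ D)
    (hcard : D.card = n) (hgsum : ∑ e ∈ D, sInf (gapSet h D e) = h) :
    ∃ g : Fin n → ℕ, Multiset.map g Finset.univ.val = gapMultiset h D ∧ phiD h n d g = D := by
  classical
  set e := nxtSeq h D d with he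
  set g : Fin n → ℕ := fun i => gap h D (e i) with hg
  have hinj : Set.InjOn e ↑(Finset.range n) := by
    intro x hx y hy hxy
    simp only [Finset.coe_range, Set.mem_Iio] at hx hy
    rcases lt_trichotomy x y with hlt | heq2 | hlt
    · exact absurd hxy (nxtSeq_injOn h D d hh hd n hcard hgsum y hy x hlt)
    · exact heq2
    · exact absurd hxy.symm (nxtSeq_injOn h D d hh hd n hcard hgsum x hx y hlt)
  have himg : (Finset.range n).image e = D := by
    apply Finset.eq_of_subset_of_card_le
    · intro x hx
      obtain ⟨j, _, rfl⟩ := Finset.mem_image.mp hx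
      exact nxtSeq_mem h D d hh hd j
    · rw [Finset.card_image_of_injOn hinj, Finset.card_range, hcard]
  have hval : D.val = (Finset.range n).val.map e := by
    rw [← himg]
    exact Finset.image_val_of_injOn hinj
  have hms : Multiset.map g Finset.univ.val = gapMultiset h D := by
    rw [gapMultiset, hval, Multiset.map_map]
    have huv : Multiset.map Fin.val (Finset.univ.val : Multiset (Fin n)) = (Finset.range n).val := by
      have h2 := Fin.map_valEmbedding_univ (n := n)
      rw [Nat.Iio_eq_range] at h2
      rw [← h2, Finset.map_val]
      rfl
    rw [← huv, Multiset.map_map]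
    rfl
  have hsInf : ∀ i : ℕ, sInf (gapSet h D (e i)) = gap h D (e i) + 1 := by
    intro i
    have := (sInf_gapSet_spec h D d hh hd (e i)).1
    rw [gap]
    omega
  have hps : ∀ i, i ≤ n → psg n g i = ∑ j ∈ Finset.range i, sInf (gapSet h D (e j)) := by
    intro i
    induction i with
    | zero => intro _; simp [psg_zero]
    | succ i ih =>
      intro hin
      have hi : i < n := by omega
      rw [psg_succ, Finset.sum_range_succ, ih (by omega), hsInf i]
      have hx : extg n g i = gap h D (e i) := by simp [extg, hi, hg]
      omega
  have hphi : phiD h n d g = D := by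
    ext a
    rw [phiD, Finset.mem_image, ← himg, Finset.mem_image]
    constructor
    · rintro ⟨i, _, rfl⟩
      refine ⟨(i : ℕ), Finset.mem_range.mpr i.isLt, ?_⟩
      rw [he, nxtSeq_eq_add h D d hh hd, ← hps i (le_of_lt i.isLt)]
    · rintro ⟨j, hj, rfl⟩
      have hjn := Finset.mem_range.mp hj
      refine ⟨⟨j, hjn⟩, Finset.mem_univ _, ?_⟩
      rw [he, nxtSeq_eq_add h D d hh hd, ← hps j (le_of_lt hjn)]
  exact ⟨g, hms, hphi⟩
end surj2


lemma mapval_perm {n : ℕ} (g : Fin n → ℕ) (σ : Equiv.Perm (Fin n)) :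
    Multiset.map (g ∘ σ) Finset.univ.val = Multiset.map g Finset.univ.val := by
  rw [← Multiset.map_map]
  congr 1
  have : (Finset.univ.map σ.toEmbedding).val = Finset.univ.val := by
    rw [Finset.map_univ_equiv]
  simpa [Finset.map_val] using this

lemma exists_perm_of_map_eq {n : ℕ} (g f0 : Fin n → ℕ)
    (hgf : Multiset.map g Finset.univ.val = Multiset.map f0 Finset.univ.val) :
    ∃ σ : Equiv.Perm (Fin n), g = f0 ∘ σ := by
  have hofn : ∀ (f : Fin n → ℕ), (Multiset.map f Finset.univ.val : Multiset ℕ) = ↑(List.ofFn f) := by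
    intro f
    rw [List.ofFn_eq_map]
    simp [Finset.univ, Fintype.elems, List.finRange]
  set τg := Tuple.sort g
  set τ0 := Tuple.sort f0
  have h1 : (List.ofFn (g ∘ τg) : Multiset ℕ) = (List.ofFn (f0 ∘ τ0) : Multiset ℕ) := by
    rw [← hofn, ← hofn, mapval_perm, mapval_perm, hgf]
  have hperm : List.Perm (List.ofFn (g ∘ ⇑τg)) (List.ofFn (f0 ∘ ⇑τ0)) := Multiset.coe_eq_coe.mp h1
  have heq : List.ofFn (g ∘ τg) = List.ofFn (f0 ∘ τ0) :=
    List.Perm.eq_of_sortedLE ((Tuple.monotone_sort g).sortedLE_ofFn)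
      ((Tuple.monotone_sort f0).sortedLE_ofFn) hperm
  have : g ∘ τg = f0 ∘ τ0 := List.ofFn_injective heq
  refine ⟨τ0 * τg⁻¹, ?_⟩
  funext x
  have := congrFun this (τg⁻¹ x)
  simpa using this

lemma count_tuples (n : ℕ) (lam : Multiset ℕ) (hcard : Multiset.card lam = n) :
    Nat.card {g : Fin n → ℕ | Multiset.map g Finset.univ.val = lam} *
      (∏ p ∈ lam.toFinset, Nat.factorial (lam.count p)) = Nat.factorial n := by
  classical
  have hofn : ∀ (f : Fin n → ℕ), (Multiset.map f Finset.univ.val : Multiset ℕ) = ↑(List.ofFn f) := by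
    intro f
    rw [List.ofFn_eq_map]
    simp [Finset.univ, Fintype.elems, List.finRange]
  -- choose f0
  have hlen : lam.toList.length = n := by rw [Multiset.length_toList, hcard]
  set f0 : Fin n → ℕ := fun i => lam.toList.get (Fin.cast hlen.symm i) with hf0
  have hf0lam : Multiset.map f0 Finset.univ.val = lam := by
    rw [hofn]
    have : List.ofFn f0 = lam.toList := by
      apply List.ext_get (by simp [hlen])
      intro i h1 h2
      simp [hf0]
    rw [this, Multiset.coe_toList]
  -- the set is the orbit of f0
  set G := (Equiv.Perm (Fin n))ᵈᵐᵃ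
  have horb : {g : Fin n → ℕ | Multiset.map g Finset.univ.val = lam} =
      MulAction.orbit G f0 := by
    ext g
    constructor
    · intro hg
      obtain ⟨σ, hσ⟩ := exists_perm_of_map_eq g f0 (by rw [hg, hf0lam])
      exact ⟨DomMulAct.mk σ, hσ.symm⟩
    · rintro ⟨σ, rfl⟩
      show Multiset.map (σ • f0) Finset.univ.val = lam
      have : (σ • f0) = f0 ∘ (DomMulAct.mk.symm σ : Equiv.Perm (Fin n)) := rfl
      rw [this, mapval_perm, hf0lam]
  rw [horb]
  -- orbit-stabilizer
  have hos : Nat.card (MulAction.orbit G f0) * Nat.card (MulAction.stabilizer G f0) =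
      Nat.card G := by
    rw [← Nat.card_prod]
    exact Nat.card_congr (MulAction.orbitProdStabilizerEquivGroup G f0)
  have hG : Nat.card G = Nat.factorial n := by
    rw [← Nat.card_congr (DomMulAct.mk : Equiv.Perm (Fin n) ≃ G)]
    simp [Nat.card_eq_fintype_card, Fintype.card_perm]
  have hstab : Nat.card (MulAction.stabilizer G f0) =
      ∏ p ∈ lam.toFinset, Nat.factorial (lam.count p) := by
    have h1 : Nat.card (MulAction.stabilizer G f0) =
        Nat.card {σ : Equiv.Perm (Fin n) // f0 ∘ σ = f0} := by
      apply Nat.card_congr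
      exact (Equiv.subtypeEquiv DomMulAct.mk.symm (fun σ => DomMulAct.mem_stabilizer_iff))
    rw [h1, Nat.card_eq_fintype_card, DomMulAct.stabilizer_card']
    have himg : Finset.univ.image f0 = lam.toFinset := by
      ext p
      rw [← hf0lam]
      simp [Finset.mem_image, Multiset.mem_toFinset, Multiset.mem_map, List.mem_ofFn, eq_comm,
        hofn]
    rw [himg]
    apply Finset.prod_congr rfl
    intro p _
    congr 1
    rw [← hf0lam, Multiset.count_map, Fintype.card_subtype, Finset.card_def, Finset.filter_val]
    congr 1
    exact Multiset.filter_congr (fun a _ => by constructor <;> exact Eq.symm)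
  rw [← hG, ← hos, hstab]


theorem stmt2 (h k : ℕ) (hh : 1 ≤ h) (hk : k + 1 ≤ h) (lam : Multiset ℕ)
    (hcard : Multiset.card lam = k + 1) (hsum : lam.sum = h - (k + 1))
    (d : ZMod h) :
    {D : Finset (ZMod h) | d ∈ D ∧ gapMultiset h D = lam}.ncard *
        (∏ p ∈ lam.toFinset, Nat.factorial (lam.count p)) =
      Nat.factorial (k + 1) := by
  classical
  set n := k + 1 with hndef
  have hh0 : 0 < h := hh
  have hn : 0 < n := Nat.succ_pos k
  set T : Set (Fin n → ℕ) := {g | Multiset.map g Finset.univ.val = lam} with hT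
  have hsum_of_mem : ∀ g ∈ T, ∑ j ∈ Finset.range n, extg n g j = h - n := by
    intro g hg
    have h1 : ∑ j ∈ Finset.range n, extg n g j = ∑ i : Fin n, g i := by
      rw [← Fin.sum_univ_eq_sum_range (fun j => extg n g j) n]
      exact Finset.sum_congr rfl (fun i _ => by simp [extg, i.isLt])
    have h2 : ∑ i : Fin n, g i = (Multiset.map g Finset.univ.val).sum := by
      rw [Finset.sum]
    rw [h1, h2, hg, hsum]
  have himage : {D : Finset (ZMod h) | d ∈ D ∧ gapMultiset h D = lam} = (phiD h n d) '' T := by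
    ext D
    constructor
    · rintro ⟨hd, hgm⟩
      have hcardD : D.card = n := by
        have hc := congrArg Multiset.card hgm
        rw [gapMultiset, Multiset.card_map] at hc
        rw [Finset.card_def, hc, hcard]
      have hgsum : ∑ e ∈ D, sInf (gapSet h D e) = h := by
        have h1 : ∀ e ∈ D, sInf (gapSet h D e) = gap h D e + 1 := by
          intro e _
          have := (sInf_gapSet_spec h D d hh0 hd e).1
          rw [gap]
          omega
        rw [Finset.sum_congr rfl h1, Finset.sum_add_distrib]
        have h2 : ∑ e ∈ D, gap h D e = lam.sum := by
          rw [← hgm, gapMultiset, Finset.sum]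
        rw [h2, hsum]
        simp [hcardD]
        omega
      obtain ⟨g, hg1, hg2⟩ := phiD_surj h D d n hh0 hn hk hd hcardD hgsum
      refine ⟨g, ?_, hg2⟩
      show Multiset.map g Finset.univ.val = lam
      rw [hg1, hgm]
    · rintro ⟨g, hgT, rfl⟩
      have hs := hsum_of_mem g hgT
      refine ⟨mem_phiD_self h n g d hn, ?_⟩
      rw [gapMultiset_phiD h n g d hh0 hn hk hs]
      exact hgT
  rw [himage, Set.ncard_image_of_injOn (fun g hg g' hg' =>
    phiD_injective h n d hh0 hn hk g g' (hsum_of_mem g hg) (hsum_of_mem g' hg'))]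
  rw [← Nat.card_coe_set_eq]
  exact count_tuples n lam hcard
end

section
/- Let h ≥ 1 and k ≥ 1 with k + 1 ≤ h, and let λ be a multiset of nonnegative integers of cardinality k + 1 whose sum is h − (k + 1). Then (k + 1) · |S_h(λ)| = Σ_{(a,b)} |S_h(λ_{a,b})| · m_{a,b} · ε_{a,b}, where the sum is over all pairs (a, b) of nonnegative integers with a ≤ b such that the multiset {a, b} is contained in λ (so a = b is allowed only when a has multiplicity at least 2 in λ); here λ_{a,b} is the multiset obtained from λ by removing one copy of a and one copy of b and adding one copy of a + b + 1, m_{a,b} is the multiplicity of a + b + 1 in λ_{a,b}, and ε_{a,b} equals 1 if a = b and 2 if a ≠ b. -/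
/-- `λ` with one copy of `a` and one of `b` removed, and one copy of `a+b+1` added. -/
def fuse (lam : Multiset ℕ) (a b : ℕ) : Multiset ℕ :=
  (a + b + 1) ::ₘ (lam - {a, b})

set_option linter.unusedSectionVars false
set_option linter.unusedVariables false
set_option maxHeartbeats 1000000

noncomputable def step' (h : ℕ) (D : Finset (ZMod h)) (d : ZMod h) : ℕ :=
  sInf (gapSet h D d)

variable {h : ℕ} [NeZero h] {D : Finset (ZMod h)} {d e x : ZMod h}

lemma h_mem_gapSet (hd : d ∈ D) : h ∈ gapSet h D d := by
  refine ⟨NeZero.pos h, ?_⟩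
  simp [ZMod.natCast_self, hd]

lemma step'_mem (hd : d ∈ D) : step' h D d ∈ gapSet h D d :=
  Nat.sInf_mem ⟨h, h_mem_gapSet hd⟩

lemma step'_pos (hd : d ∈ D) : 0 < step' h D d := (step'_mem hd).1

lemma add_step'_mem (hd : d ∈ D) : d + (step' h D d : ZMod h) ∈ D := (step'_mem hd).2

lemma step'_le (hd : d ∈ D) : step' h D d ≤ h := Nat.sInf_le (h_mem_gapSet hd)

lemma not_mem_of_lt_step' {m : ℕ} (hm : 0 < m) (hm' : m < step' h D d) :
    d + (m : ZMod h) ∉ D := fun hmem => Nat.notMem_of_lt_sInf hm' ⟨hm, hmem⟩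

lemma gap_eq (hd : d ∈ D) : gap h D d = step' h D d - 1 := rfl

lemma step'_eq_gap_add_one (hd : d ∈ D) : step' h D d = gap h D d + 1 := by
  have := step'_pos hd
  rw [gap_eq hd]; omega

lemma step'_eq_of {s : ℕ} (hs : 0 < s) (hmem : d + (s : ZMod h) ∈ D)
    (hmin : ∀ m, 0 < m → m < s → d + (m : ZMod h) ∉ D) : step' h D d = s := by
  have h1 : step' h D d ≤ s := Nat.sInf_le ⟨hs, hmem⟩
  rcases lt_or_eq_of_le h1 with h2 | h2
  · have hne : (gapSet h D d).Nonempty := ⟨s, hs, hmem⟩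
    have := Nat.sInf_mem hne
    exact absurd this.2 (hmin _ this.1 h2)
  · exact h2

/-- Key uniqueness: points at distance ≤ step from two elements coincide. -/
lemma step'_unique {x1 x2 : ZMod h} {m1 m2 : ℕ} (hx1 : x1 ∈ D) (hx2 : x2 ∈ D)
    (hm1 : 0 < m1) (hm1' : m1 ≤ step' h D x1) (hm2 : 0 < m2) (hm2' : m2 ≤ step' h D x2)
    (heq : x1 + (m1 : ZMod h) = x2 + (m2 : ZMod h)) : x1 = x2 ∧ m1 = m2 := by
  wlog hle : m1 ≤ m2 generalizing x1 x2 m1 m2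
  · obtain ⟨h1, h2⟩ := this hx2 hx1 hm2 hm2' hm1 hm1' heq.symm (by omega)
    exact ⟨h1.symm, h2.symm⟩
  have hx : x1 = x2 + ((m2 - m1 : ℕ) : ZMod h) := by
    have : ((m2 : ℕ) : ZMod h) = ((m2 - m1 : ℕ) : ZMod h) + (m1 : ZMod h) := by
      rw [← Nat.cast_add]; congr 1; omega
    rw [this, ← add_assoc] at heq
    exact add_right_cancel heq
  rcases eq_or_lt_of_le hle with hlt | hlt
  · subst hlt
    refine ⟨?_, rfl⟩
    simpa using hx
  · exfalso
    have : x2 + ((m2 - m1 : ℕ) : ZMod h) ∉ D :=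
      not_mem_of_lt_step' (by omega) (by omega)
    rw [← hx] at this
    exact this hx1


variable {h : ℕ} [NeZero h] {D : Finset (ZMod h)} {d e x : ZMod h}

lemma step'_lt_h (hd : d ∈ D) (hcard : 2 ≤ D.card) : step' h D d < h := by
  obtain ⟨x, hx, hxd⟩ := Finset.exists_mem_ne (show 1 < D.card by omega) d
  set m : ℕ := (x - d).val with hm
  have hm0 : 0 < m := by
    rw [hm]
    simp only [ZMod.val_pos]
    exact sub_ne_zero_of_ne hxd
  have hmh : m < h := ZMod.val_lt _
  have hdm : d + (m : ZMod h) = x := by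
    rw [hm, ZMod.natCast_val, ZMod.cast_id]; ring
  have : step' h D d ≤ m := Nat.sInf_le ⟨hm0, by rw [hdm]; exact hx⟩
  omega

lemma next_ne (hd : d ∈ D) (hcard : 2 ≤ D.card) : d + (step' h D d : ZMod h) ≠ d := by
  intro heq
  have h0 : ((step' h D d : ℕ) : ZMod h) = 0 := add_eq_left.mp heq
  have := (ZMod.natCast_eq_zero_iff _ _).mp h0
  have := Nat.le_of_dvd (step'_pos hd) this
  have := step'_lt_h hd hcard
  omega

lemma exists_pred (hd : d ∈ D) : ∃ e ∈ D, e + (step' h D e : ZMod h) = d := by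
  classical
  have hne : D.Nonempty := ⟨d, hd⟩
  set f : {x // x ∈ D} → {x // x ∈ D} :=
    fun x => ⟨x.1 + (step' h D x.1 : ZMod h), add_step'_mem x.2⟩ with hf
  have hinj : Function.Injective f := by
    intro x1 x2 heq
    have := Subtype.mk_eq_mk.mp heq
    have := step'_unique x1.2 x2.2 (step'_pos x1.2) le_rfl (step'_pos x2.2) le_rfl this
    exact Subtype.ext this.1
  have hsurj : Function.Surjective f := Finite.surjective_of_injective hinj
  obtain ⟨e, he⟩ := hsurj ⟨d, hd⟩
  exact ⟨e.1, e.2, Subtype.mk_eq_mk.mp he⟩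

variable {h : ℕ} [NeZero h] {D : Finset (ZMod h)} {d e x : ZMod h}

lemma next_mem_erase (hd : d ∈ D) (he : e ∈ D) (hed : e ≠ d)
    (hnext : e + (step' h D e : ZMod h) = d) :
    d + (step' h D d : ZMod h) ∈ D.erase d := by
  refine Finset.mem_erase.mpr ⟨?_, add_step'_mem hd⟩
  intro heq
  have heq2 : e + (step' h D e : ZMod h) = d + (step' h D d : ZMod h) := by
    rw [hnext, heq]
  exact hed (step'_unique he hd (step'_pos he) le_rfl (step'_pos hd) le_rfl heq2).1

lemma step'_erase_of_ne (hd : d ∈ D) (hx : x ∈ D) (hxd : x ≠ d)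
    (hnext : x + (step' h D x : ZMod h) ≠ d) :
    step' h (D.erase d) x = step' h D x := by
  apply step'_eq_of (step'_pos hx)
  · exact Finset.mem_erase.mpr ⟨hnext, add_step'_mem hx⟩
  · intro m hm hm' hmem
    exact not_mem_of_lt_step' hm hm' (Finset.mem_of_mem_erase hmem)

lemma step'_erase_pred (hd : d ∈ D) (he : e ∈ D) (hed : e ≠ d)
    (hnext : e + (step' h D e : ZMod h) = d) :
    step' h (D.erase d) e = step' h D e + step' h D d := by
  set s := step' h D e with hs
  set t := step' h D d with ht
  apply step'_eq_of (by have := step'_pos he; omega)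
  · have : e + ((s + t : ℕ) : ZMod h) = d + (t : ZMod h) := by
      push_cast; rw [← hnext]; ring
    rw [this]
    exact next_mem_erase hd he hed hnext
  · intro m hm hm' hmem
    have hmem' : e + (m : ZMod h) ∈ D := Finset.mem_of_mem_erase hmem
    rcases lt_trichotomy m s with hlt | heq | hgt
    · exact not_mem_of_lt_step' hm hlt hmem'
    · subst heq
      rw [hnext] at hmem
      exact (Finset.mem_erase.mp hmem).1 rfl
    · have : e + (m : ZMod h) = d + ((m - s : ℕ) : ZMod h) := by
        rw [← hnext, add_assoc, ← Nat.cast_add]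
        congr 2
        omega
      rw [this] at hmem'
      exact not_mem_of_lt_step' (by omega) (by omega) hmem'

lemma mem_of_mem_R (hR : x ∈ (D.val.erase d).erase e) : x ∈ D ∧ x ≠ d ∧ x ≠ e := by
  have h1 : x ∈ D.val.erase d := Multiset.mem_of_mem_erase hR
  have hnd : (D.val.erase d).Nodup := D.nodup.erase d
  refine ⟨Multiset.mem_of_mem_erase h1, ?_, ?_⟩
  · exact (D.nodup.mem_erase_iff.mp h1).1
  · exact (hnd.mem_erase_iff.mp hR).1

lemma gapMultiset_eq_cons (hd : d ∈ D) (he : e ∈ D) (hed : e ≠ d) :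
    gapMultiset h D =
      gap h D d ::ₘ gap h D e ::ₘ ((D.val.erase d).erase e).map (gap h D) := by
  have h1 : e ∈ D.val.erase d := D.nodup.mem_erase_iff.mpr ⟨hed, he⟩
  have h2 : D.val = d ::ₘ e ::ₘ (D.val.erase d).erase e := by
    rw [Multiset.cons_erase h1, Multiset.cons_erase hd]
  unfold gapMultiset
  rw [h2]
  simp

lemma gapMultiset_erase (hd : d ∈ D) (he : e ∈ D) (hed : e ≠ d)
    (hnext : e + (step' h D e : ZMod h) = d) :
    gapMultiset h (D.erase d) =
      (gap h D e + gap h D d + 1) ::ₘ ((D.val.erase d).erase e).map (gap h D) := by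
  have h1 : e ∈ D.val.erase d := D.nodup.mem_erase_iff.mpr ⟨hed, he⟩
  have h2 : D.val.erase d = e ::ₘ (D.val.erase d).erase e := (Multiset.cons_erase h1).symm
  unfold gapMultiset
  rw [Finset.erase_val, h2, Multiset.map_cons]
  congr 1
  · rw [gap_eq (Finset.mem_erase.mpr ⟨hed, he⟩), step'_erase_pred hd he hed hnext,
      step'_eq_gap_add_one he, step'_eq_gap_add_one hd]
    omega
  · rw [Multiset.erase_cons_head]
    apply Multiset.map_congr rfl
    intro x hx
    obtain ⟨hxD, hxd, hxe⟩ := mem_of_mem_R hx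
    have hnx : x + (step' h D x : ZMod h) ≠ d := by
      intro heq
      rw [← hnext] at heq
      exact hxe (step'_unique hxD he (step'_pos hxD) le_rfl (step'_pos he) le_rfl heq).1
    rw [gap_eq (Finset.mem_erase.mpr ⟨hxd, hxD⟩), gap_eq hxD,
      step'_erase_of_ne hd hxD hxd hnx]

variable {h : ℕ} [NeZero h] {D' : Finset (ZMod h)} {e x : ZMod h} {a b : ℕ}

section Insert

variable (he : e ∈ D') (hstep : step' h D' e = a + b + 2)

include he hstep

lemma ins_not_mem : e + ((a + 1 : ℕ) : ZMod h) ∉ D' :=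
  not_mem_of_lt_step' (by omega) (by omega)

lemma ins_step_d :
    step' h (insert (e + ((a + 1 : ℕ) : ZMod h)) D') (e + ((a + 1 : ℕ) : ZMod h)) = b + 1 := by
  have hle := step'_le he
  apply step'_eq_of (by omega)
  · have : e + ((a + 1 : ℕ) : ZMod h) + ((b + 1 : ℕ) : ZMod h)
        = e + (step' h D' e : ZMod h) := by
      rw [hstep]; push_cast; ring
    rw [this]
    exact Finset.mem_insert_of_mem (add_step'_mem he)
  · intro m hm hm' hmem
    have hform : e + ((a + 1 : ℕ) : ZMod h) + ((m : ℕ) : ZMod h)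
        = e + ((a + 1 + m : ℕ) : ZMod h) := by push_cast; ring
    rw [hform] at hmem
    rcases Finset.mem_insert.mp hmem with heq | hmem'
    · -- e + (a+1+m) = e + (a+1), so h ∣ m, but 0 < m < h
      have : ((a + 1 + m : ℕ) : ZMod h) = ((a + 1 : ℕ) : ZMod h) := by
        exact add_left_cancel heq
      have : ((m : ℕ) : ZMod h) = 0 := by
        have := sub_eq_zero_of_eq this
        rwa [← Nat.cast_sub (by omega), Nat.add_sub_cancel_left] at this
      have := (ZMod.natCast_eq_zero_iff _ _).mp this
      have := Nat.le_of_dvd hm this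
      omega
    · exact not_mem_of_lt_step' (by omega) (by omega) hmem'

lemma ins_step_e :
    step' h (insert (e + ((a + 1 : ℕ) : ZMod h)) D') e = a + 1 := by
  have hle := step'_le he
  apply step'_eq_of (by omega)
  · exact Finset.mem_insert_self _ _
  · intro m hm hm' hmem
    rcases Finset.mem_insert.mp hmem with heq | hmem'
    · have : ((a + 1 - m : ℕ) : ZMod h) = 0 := by
        have h2 : ((a + 1 : ℕ) : ZMod h) = ((m : ℕ) : ZMod h) := (add_left_cancel heq).symm
        have := sub_eq_zero_of_eq h2
        rwa [← Nat.cast_sub (by omega)] at this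
      have := (ZMod.natCast_eq_zero_iff _ _).mp this
      have := Nat.le_of_dvd (by omega) this
      omega
    · exact not_mem_of_lt_step' hm (by omega) hmem'

lemma ins_step_other (hx : x ∈ D') (hxe : x ≠ e) :
    step' h (insert (e + ((a + 1 : ℕ) : ZMod h)) D') x = step' h D' x := by
  apply step'_eq_of (step'_pos hx)
  · exact Finset.mem_insert_of_mem (add_step'_mem hx)
  · intro m hm hm' hmem
    rcases Finset.mem_insert.mp hmem with heq | hmem'
    · exact hxe (step'_unique hx he hm (by omega) (by omega) (by omega) heq).1
    · exact not_mem_of_lt_step' hm hm' hmem'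

lemma gapMultiset_insert :
    gapMultiset h (insert (e + ((a + 1 : ℕ) : ZMod h)) D') =
      b ::ₘ a ::ₘ (D'.val.erase e).map (gap h D') := by
  have hnotmem := ins_not_mem he hstep
  have hval : (insert (e + ((a + 1 : ℕ) : ZMod h)) D').val
      = (e + ((a + 1 : ℕ) : ZMod h)) ::ₘ D'.val := Finset.insert_val_of_notMem hnotmem
  have hval2 : D'.val = e ::ₘ D'.val.erase e := (Multiset.cons_erase he).symm
  unfold gapMultiset
  rw [hval]
  conv_lhs => rw [hval2]
  rw [Multiset.map_cons, Multiset.map_cons]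
  congr 1
  · rw [gap_eq (Finset.mem_insert_self _ _), ins_step_d he hstep]; omega
  congr 1
  · rw [gap_eq (Finset.mem_insert_of_mem he), ins_step_e he hstep]; omega
  · apply Multiset.map_congr rfl
    intro x hx
    have hxe : x ≠ e := (D'.nodup.mem_erase_iff.mp hx).1
    have hxD : x ∈ D' := Multiset.mem_of_mem_erase hx
    rw [gap_eq (Finset.mem_insert_of_mem hxD), gap_eq hxD, ins_step_other he hstep hxD hxe]

lemma gapMultiset_self_cons :
    gapMultiset h D' = (a + b + 1) ::ₘ (D'.val.erase e).map (gap h D') := by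
  have hval2 : D'.val = e ::ₘ D'.val.erase e := (Multiset.cons_erase he).symm
  unfold gapMultiset
  conv_lhs => rw [hval2]
  rw [Multiset.map_cons]
  congr 1
  rw [gap_eq he, hstep]; omega

end Insert

lemma multiset_aux1 {a b : ℕ} {M lam : Multiset ℕ} (hl : lam = b ::ₘ a ::ₘ M) :
    ({a, b} : Multiset ℕ) ≤ lam ∧ lam - {a, b} = M := by
  subst hl
  constructor
  · rw [Multiset.le_iff_count]
    intro c
    simp only [Multiset.insert_eq_cons, Multiset.count_cons, Multiset.count_singleton,
      Multiset.count_zero]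
    split_ifs <;> omega
  · ext c
    simp only [Multiset.insert_eq_cons, Multiset.count_sub, Multiset.count_cons,
      Multiset.count_singleton, Multiset.count_zero]
    split_ifs <;> omega

lemma multiset_aux2 {a b : ℕ} {lam : Multiset ℕ} (hab : ({a, b} : Multiset ℕ) ≤ lam) :
    b ::ₘ a ::ₘ (lam - {a, b}) = lam := by
  have h := Multiset.le_iff_count.mp hab
  ext c
  have := h c
  simp only [Multiset.insert_eq_cons, Multiset.count_cons, Multiset.count_singleton,
    Multiset.count_zero] at this ⊢
  rw [Multiset.count_sub]
  simp only [Multiset.insert_eq_cons, Multiset.count_cons, Multiset.count_singleton,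
    Multiset.count_zero]
  split_ifs at this ⊢ <;> omega

variable {h : ℕ} [NeZero h] {D D' : Finset (ZMod h)} {d e x : ZMod h} {a b : ℕ}

/-- Insertion: if `D' ∈ Sh (fuse lam a b)` and `e` has gap `a+b+1`, inserting
`e + (a+1)` produces an element of `Sh lam`. -/
lemma insert_gapMultiset {lam : Multiset ℕ} (hab : ({a, b} : Multiset ℕ) ≤ lam)
    (hD' : gapMultiset h D' = fuse lam a b) (he : e ∈ D') (hgap : gap h D' e = a + b + 1) :
    gapMultiset h (insert (e + ((a + 1 : ℕ) : ZMod h)) D') = lam := by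
  have hstep : step' h D' e = a + b + 2 := by
    have h1 := step'_eq_gap_add_one he
    omega
  have h1 := gapMultiset_self_cons he hstep
  rw [hD'] at h1
  unfold fuse at h1
  have h2 : (D'.val.erase e).map (gap h D') = lam - {a, b} :=
    ((Multiset.cons_inj_right _).mp h1).symm
  rw [gapMultiset_insert he hstep, h2]
  exact multiset_aux2 hab

lemma sum_sym (O : Finset (ℕ × ℕ)) (hO : ∀ ab ∈ O, ab.swap ∈ O)
    (f : ℕ × ℕ → ℕ) (hf : ∀ ab ∈ O, f ab.swap = f ab) :
    ∑ ab ∈ O, f ab =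
      ∑ ab ∈ O.filter (fun ab => ab.1 ≤ ab.2),
        f ab * (if ab.1 = ab.2 then 1 else 2) := by
  classical
  have hsplit := Finset.sum_filter_add_sum_filter_not O (fun ab => ab.1 ≤ ab.2) f
  have hswap : ∑ ab ∈ O.filter (fun ab => ¬ ab.1 ≤ ab.2), f ab
      = ∑ ab ∈ O.filter (fun ab => ab.1 < ab.2), f ab := by
    apply Finset.sum_nbij' (i := Prod.swap) (j := Prod.swap)
    · intro ab hab
      have := Finset.mem_filter.mp hab
      refine Finset.mem_filter.mpr ⟨hO _ this.1, ?_⟩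
      simp only [Prod.fst_swap, Prod.snd_swap]
      omega
    · intro ab hab
      have := Finset.mem_filter.mp hab
      refine Finset.mem_filter.mpr ⟨hO _ this.1, ?_⟩
      simp only [Prod.fst_swap, Prod.snd_swap]
      omega
    · intro ab hab; simp
    · intro ab hab; simp
    · intro ab hab
      exact (hf ab (Finset.mem_filter.mp hab).1).symm
  have hrhs : ∑ ab ∈ O.filter (fun ab => ab.1 ≤ ab.2), f ab * (if ab.1 = ab.2 then 1 else 2)
      = (∑ ab ∈ O.filter (fun ab => ab.1 ≤ ab.2), f ab)
        + ∑ ab ∈ O.filter (fun ab => ab.1 < ab.2), f ab := by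
    have h1 : ∀ ab ∈ O.filter (fun ab => ab.1 ≤ ab.2),
        f ab * (if ab.1 = ab.2 then 1 else 2)
          = f ab + (if ab.1 < ab.2 then f ab else 0) := by
      intro ab hab
      have hle := (Finset.mem_filter.mp hab).2
      split_ifs <;> omega
    rw [Finset.sum_congr rfl h1, Finset.sum_add_distrib]
    congr 1
    rw [← Finset.sum_filter, Finset.filter_filter]
    apply Finset.sum_congr _ (fun _ _ => rfl)
    apply Finset.filter_congr
    intro ab _
    omega
  omega

theorem stmt3 (h k : ℕ) (hh : 1 ≤ h) (hk1 : 1 ≤ k) (hk : k + 1 ≤ h)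
    (lam : Multiset ℕ) (hcard : Multiset.card lam = k + 1)
    (hsum : lam.sum = h - (k + 1)) :
    (k + 1) * (Sh h lam).ncard =
      ∑ ab ∈ (lam.toFinset ×ˢ lam.toFinset).filter
          (fun ab => ab.1 ≤ ab.2 ∧ ({ab.1, ab.2} : Multiset ℕ) ≤ lam),
        (Sh h (fuse lam ab.1 ab.2)).ncard *
          (fuse lam ab.1 ab.2).count (ab.1 + ab.2 + 1) *
          (if ab.1 = ab.2 then 1 else 2) := by
  classical
  haveI : NeZero h := ⟨by omega⟩
  -- ncard of Sh as a Finset card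
  have ncard_eq : ∀ s : Set (Finset (ZMod h)),
      s.ncard = (Finset.univ.filter (· ∈ s)).card := by
    intro s
    rw [show s = ↑(Finset.univ.filter (· ∈ s)) by ext D; simp]
    rw [Set.ncard_coe_finset]
    congr 1
    ext D; simp
  set T : Finset (Finset (ZMod h)) := Finset.univ.filter (· ∈ Sh h lam) with hT
  set O : Finset (ℕ × ℕ) :=
    (lam.toFinset ×ˢ lam.toFinset).filter
      (fun ab => ({ab.1, ab.2} : Multiset ℕ) ≤ lam) with hO
  set Y : ℕ × ℕ → Finset ((_ : Finset (ZMod h)) × ZMod h) := fun ab =>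
    (Finset.univ.filter (· ∈ Sh h (fuse lam ab.1 ab.2))).sigma
      (fun D' => D'.filter (fun e => gap h D' e = ab.1 + ab.2 + 1)) with hY
  set X : Finset ((_ : Finset (ZMod h)) × ZMod h) := T.sigma (fun D => D) with hX
  have hmemX : ∀ p : (_ : Finset (ZMod h)) × ZMod h,
      p ∈ X ↔ gapMultiset h p.1 = lam ∧ p.2 ∈ p.1 := by
    intro p
    simp only [hX, hT, Finset.mem_sigma, Finset.mem_filter, Finset.mem_univ, true_and]
    rfl
  have hmemY : ∀ ab (q : (_ : Finset (ZMod h)) × ZMod h),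
      q ∈ Y ab ↔ gapMultiset h q.1 = fuse lam ab.1 ab.2 ∧ q.2 ∈ q.1 ∧
        gap h q.1 q.2 = ab.1 + ab.2 + 1 := by
    intro ab q
    simp only [hY, Finset.mem_sigma, Finset.mem_filter, Finset.mem_univ, true_and]
    rfl
  -- cardinality of members of Sh lam
  have hcardD : ∀ D : Finset (ZMod h), gapMultiset h D = lam → D.card = k + 1 := by
    intro D hD
    have := congrArg Multiset.card hD
    simp only [gapMultiset, Multiset.card_map] at this
    rw [← hcard, ← this]
    rfl
  -- LHS
  have hXcard : X.card = (k + 1) * T.card := by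
    rw [hX, Finset.card_sigma]
    rw [Finset.sum_congr rfl (fun D (hD : D ∈ T) => hcardD D (Finset.mem_filter.mp hD).2)]
    rw [Finset.sum_const, smul_eq_mul, mul_comm]
  -- RHS per-pair count
  have hYcard : ∀ ab : ℕ × ℕ, (Y ab).card =
      (Sh h (fuse lam ab.1 ab.2)).ncard * (fuse lam ab.1 ab.2).count (ab.1 + ab.2 + 1) := by
    intro ab
    rw [hY, Finset.card_sigma, ncard_eq]
    have inner : ∀ D' ∈ Finset.univ.filter (· ∈ Sh h (fuse lam ab.1 ab.2)),
        (D'.filter (fun e => gap h D' e = ab.1 + ab.2 + 1)).card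
          = (fuse lam ab.1 ab.2).count (ab.1 + ab.2 + 1) := by
      intro D' hD'
      have hgm : gapMultiset h D' = fuse lam ab.1 ab.2 := (Finset.mem_filter.mp hD').2
      rw [← hgm]
      unfold gapMultiset
      rw [Multiset.count_map]
      have : D'.val.filter (fun a => ab.1 + ab.2 + 1 = gap h D' a)
          = D'.val.filter (fun e => gap h D' e = ab.1 + ab.2 + 1) := by
        apply Multiset.filter_congr
        intro x _
        exact eq_comm
      rw [this]
      rfl
    rw [Finset.sum_congr rfl inner, Finset.sum_const, smul_eq_mul]
  -- the bijection
  have hbij : (O.sigma Y).card = X.card := by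
    apply Finset.card_bij
      (fun q _ => (⟨insert (q.2.2 + ((q.1.1 + 1 : ℕ) : ZMod h)) q.2.1,
        q.2.2 + ((q.1.1 + 1 : ℕ) : ZMod h)⟩ : (_ : Finset (ZMod h)) × ZMod h))
    · -- maps into X
      rintro ⟨⟨a, b⟩, D', e⟩ hq
      obtain ⟨hqO, hqY⟩ := Finset.mem_sigma.mp hq
      obtain ⟨hD', he, hgap⟩ := (hmemY (a, b) ⟨D', e⟩).mp hqY
      dsimp only at hD' he hgap
      have hab : ({a, b} : Multiset ℕ) ≤ lam := (Finset.mem_filter.mp hqO).2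
      rw [hmemX]
      exact ⟨insert_gapMultiset hab hD' he hgap, Finset.mem_insert_self _ _⟩
    · -- injective
      rintro ⟨⟨a1, b1⟩, D1, e1⟩ hq1 ⟨⟨a2, b2⟩, D2, e2⟩ hq2 heq
      obtain ⟨hq1O, hq1Y⟩ := Finset.mem_sigma.mp hq1
      obtain ⟨hD1, he1, hgap1⟩ := (hmemY (a1, b1) ⟨D1, e1⟩).mp hq1Y
      dsimp only at hD1 he1 hgap1
      obtain ⟨hq2O, hq2Y⟩ := Finset.mem_sigma.mp hq2
      obtain ⟨hD2, he2, hgap2⟩ := (hmemY (a2, b2) ⟨D2, e2⟩).mp hq2Y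
      dsimp only at hD2 he2 hgap2
      have hDeq := congrArg (fun p : (_ : Finset (ZMod h)) × ZMod h => p.1) heq
      have hdeq := congrArg (fun p : (_ : Finset (ZMod h)) × ZMod h => p.2) heq
      simp only at hDeq hdeq
      have hstep1 : step' h D1 e1 = a1 + b1 + 2 := by
        have := step'_eq_gap_add_one he1; omega
      have hstep2 : step' h D2 e2 = a2 + b2 + 2 := by
        have := step'_eq_gap_add_one he2; omega
      have hn1 : e1 + ((a1 + 1 : ℕ) : ZMod h) ∉ D1 := ins_not_mem he1 hstep1
      have hn2 : e2 + ((a2 + 1 : ℕ) : ZMod h) ∉ D2 := ins_not_mem he2 hstep2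
      have hD12 : D1 = D2 := by
        have h1 := Finset.erase_insert hn1
        have h2 := Finset.erase_insert hn2
        rw [← h1, ← h2, hDeq, hdeq]
      subst hD12
      have he12 : e1 = e2 ∧ a1 + 1 = a2 + 1 :=
        step'_unique he1 he2 (by omega) (by omega) (by omega) (by omega) hdeq
      have ha : a1 = a2 := by omega
      have he' : e1 = e2 := he12.1
      subst ha; subst he'
      have hb : b1 = b2 := by rw [hgap1] at hgap2; omega
      subst hb
      rfl
    · -- surjective
      rintro ⟨D, dd⟩ hp
      obtain ⟨hD, hd⟩ := (hmemX ⟨D, dd⟩).mp hp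
      dsimp only at hD hd
      have hcard2 : 2 ≤ D.card := by rw [hcardD D hD]; omega
      obtain ⟨e, he, hnext⟩ := exists_pred hd
      have hed : e ≠ dd := by
        intro heq
        subst heq
        exact next_ne he hcard2 hnext
      set a := gap h D e with hagap
      set b := gap h D dd with hbgap
      set M := ((D.val.erase dd).erase e).map (gap h D) with hM
      have hlam : lam = b ::ₘ a ::ₘ M := by
        rw [← hD]
        exact gapMultiset_eq_cons hd he hed
      obtain ⟨hab, hsub⟩ := multiset_aux1 hlam
      have hfu : gapMultiset h (D.erase dd) = fuse lam a b := by
        rw [gapMultiset_erase hd he hed hnext]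
        unfold fuse
        rw [hsub]
      have heE : e ∈ D.erase dd := Finset.mem_erase.mpr ⟨hed, he⟩
      have hgapE : gap h (D.erase dd) e = a + b + 1 := by
        rw [gap_eq heE, step'_erase_pred hd he hed hnext,
          step'_eq_gap_add_one he, step'_eq_gap_add_one hd]
        omega
      have hamem : a ∈ lam := by rw [hlam]; simp
      have hbmem : b ∈ lam := by rw [hlam]; simp
      have hqO : (a, b) ∈ O := by
        rw [hO]
        refine Finset.mem_filter.mpr ⟨Finset.mem_product.mpr ⟨?_, ?_⟩, hab⟩
        · exact Multiset.mem_toFinset.mpr hamem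
        · exact Multiset.mem_toFinset.mpr hbmem
      have hqY : (⟨D.erase dd, e⟩ : (_ : Finset (ZMod h)) × ZMod h) ∈ Y (a, b) :=
        (hmemY (a, b) ⟨D.erase dd, e⟩).mpr ⟨hfu, heE, hgapE⟩
      refine ⟨⟨(a, b), D.erase dd, e⟩, Finset.mem_sigma.mpr ⟨hqO, hqY⟩, ?_⟩
      have hd' : e + ((a + 1 : ℕ) : ZMod h) = dd := by
        rw [show a + 1 = step' h D e from (step'_eq_gap_add_one he).symm]
        exact hnext
      simp only [hd', Finset.insert_erase hd]
  -- symmetry facts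
  have hfusesym : ∀ a b : ℕ, fuse lam a b = fuse lam b a := by
    intro a b
    unfold fuse
    rw [Multiset.pair_comm, Nat.add_comm a b]
  have hOswap : ∀ ab ∈ O, ab.swap ∈ O := by
    rintro ⟨a, b⟩ hab
    rw [hO] at hab ⊢
    obtain ⟨hmem, hle⟩ := Finset.mem_filter.mp hab
    obtain ⟨h1, h2⟩ := Finset.mem_product.mp hmem
    refine Finset.mem_filter.mpr ⟨Finset.mem_product.mpr ⟨h2, h1⟩, ?_⟩
    rwa [Prod.fst_swap, Prod.snd_swap, Multiset.pair_comm]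
  set f : ℕ × ℕ → ℕ := fun ab =>
    (Sh h (fuse lam ab.1 ab.2)).ncard * (fuse lam ab.1 ab.2).count (ab.1 + ab.2 + 1) with hf
  have hfsym : ∀ ab ∈ O, f ab.swap = f ab := by
    rintro ⟨a, b⟩ _
    simp only [hf, Prod.fst_swap, Prod.snd_swap]
    rw [hfusesym b a, Nat.add_comm b a]
  -- assemble
  have key : (k + 1) * (Sh h lam).ncard = ∑ ab ∈ O, f ab := by
    rw [ncard_eq, ← hT, ← hXcard, ← hbij, Finset.card_sigma]
    exact Finset.sum_congr rfl (fun ab _ => hYcard ab)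
  rw [key, sum_sym O hOswap f hfsym]
  apply Finset.sum_congr
  · rw [hO, Finset.filter_filter]
    apply Finset.filter_congr
    intro ab _
    exact and_comm
  · intro ab _
    rfl
end

section
/- Let n ≥ 1 and let S ⊆ {1, …, n}. Then the number of rooted labeled forests p on n vertices such that every k ∈ S is a descending vertex of p (i.e., p(k) > k for all k ∈ S), multiplied by (n+1)^{|S|}, equals (n+1)^{n−1} · ∏_{k ∈ S} (n − k). In particular each vertex k is descending with probability (n−k)/(n+1) and these events are independent. -/
open Finset

/-- A rooted labeled forest on vertices `1, …, n`, encoded by its parent function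
extended by `p 0 = 0`: every vertex reaches `0` under iteration. -/
def IsForest {n : ℕ} (p : Fin (n + 1) → Fin (n + 1)) : Prop :=
  p 0 = 0 ∧ ∀ k : Fin (n + 1), ∃ m : ℕ, p^[m] k = 0

namespace ForestAux
attribute [local instance] Classical.propDecidable
variable {n : ℕ}

def Reaches (p : Fin (n+1) → Fin (n+1)) (k : Fin (n+1)) : Prop := ∃ m, p^[m] k = 0

def ForestOn (V : Finset (Fin (n+1))) (p : Fin (n+1) → Fin (n+1)) : Prop :=
  p 0 = 0 ∧ (∀ k, k ∉ V → p k = k) ∧ (∀ k ∈ V, p k ∈ V) ∧ ∀ k ∈ V, Reaches p k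

noncomputable def F (V S : Finset (Fin (n+1))) (s : Fin (n+1) → Fin (n+1)) :
    Finset (Fin (n+1) → Fin (n+1)) :=
  Finset.univ.filter (fun p => ForestOn V p ∧ ∀ k ∈ S, p k = s k)

noncomputable def T (V S : Finset (Fin (n+1))) (s : Fin (n+1) → Fin (n+1))
    (x : Fin (n+1) → ℕ) : ℕ :=
  ∑ p ∈ F V S s, ∏ k ∈ V \ insert 0 S, x (p k)

lemma reaches_step {p : Fin (n+1) → Fin (n+1)} {k u : Fin (n+1)} (h : p k = u)
    (hu : Reaches p u) : Reaches p k := by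
  obtain ⟨m, hm⟩ := hu
  exact ⟨m + 1, by rw [Function.iterate_succ_apply, h, hm]⟩

lemma forest_ne_self {V : Finset (Fin (n+1))} {p : Fin (n+1) → Fin (n+1)}
    (hp : ForestOn V p) {k : Fin (n+1)} (hk : k ∈ V) (hk0 : k ≠ 0) : p k ≠ k := by
  intro h
  obtain ⟨m, hm⟩ := hp.2.2.2 k hk
  rw [Function.iterate_fixed h] at hm
  exact hk0 hm

lemma mem_F_iff {V S : Finset (Fin (n+1))} {s p : Fin (n+1) → Fin (n+1)} :
    p ∈ F V S s ↔ ForestOn V p ∧ ∀ k ∈ S, p k = s k := by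
  simp [F]

def piMap (k₀ v : Fin (n+1)) (p : Fin (n+1) → Fin (n+1)) : Fin (n+1) → Fin (n+1) :=
  fun k => if k = k₀ then k₀ else if p k = k₀ then v else p k

def rhoMap (k₀ v : Fin (n+1)) (S : Finset (Fin (n+1))) (s : Fin (n+1) → Fin (n+1))
    (C : Finset (Fin (n+1))) (p' : Fin (n+1) → Fin (n+1)) : Fin (n+1) → Fin (n+1) :=
  fun k => if k = k₀ then v else if k ∈ C ∨ (k ∈ S ∧ s k = k₀) then k₀ else p' k

lemma reaches_piMap {k₀ v : Fin (n+1)} {p : Fin (n+1) → Fin (n+1)}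
    (hk₀0 : k₀ ≠ 0) (hvk : v ≠ k₀) (hpk₀ : p k₀ = v) :
    ∀ m k, p^[m] k = 0 → k ≠ k₀ → Reaches (piMap k₀ v p) k := by
  intro m
  induction m using Nat.strong_induction_on with
  | _ m IH =>
    intro k hm hk
    match m, hm with
    | 0, hm => exact ⟨0, hm⟩
    | (m'+1), hm =>
      rw [Function.iterate_succ_apply] at hm
      by_cases hpk : p k = k₀
      · rw [hpk] at hm
        match m', hm with
        | 0, hm => exact absurd hm hk₀0
        | (m''+1), hm =>
          rw [Function.iterate_succ_apply, hpk₀] at hm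
          have hv : Reaches (piMap k₀ v p) v := IH m'' (by omega) v hm hvk
          refine reaches_step ?_ hv
          simp [piMap, hk, hpk]
      · have hrec : Reaches (piMap k₀ v p) (p k) := IH m' (by omega) (p k) hm hpk
        refine reaches_step ?_ hrec
        simp [piMap, hk, hpk]

lemma reaches_rhoMap {k₀ v : Fin (n+1)} {S C : Finset (Fin (n+1))}
    {s p' : Fin (n+1) → Fin (n+1)}
    (hp'k₀ : p' k₀ = k₀) (hk₀0 : k₀ ≠ 0)
    (hC : ∀ k, (k ∈ C ∨ (k ∈ S ∧ s k = k₀)) → p' k = v) :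
    ∀ m k, p'^[m] k = 0 → Reaches (rhoMap k₀ v S s C p') k := by
  intro m
  induction m with
  | zero => intro k hm; exact ⟨0, hm⟩
  | succ m IH =>
    intro k hm
    rw [Function.iterate_succ_apply] at hm
    by_cases hk : k = k₀
    · subst hk
      rw [hp'k₀, Function.iterate_fixed hp'k₀] at hm
      exact absurd hm hk₀0
    · have hrec : Reaches (rhoMap k₀ v S s C p') (p' k) := IH (p' k) hm
      by_cases hb : k ∈ C ∨ (k ∈ S ∧ s k = k₀)
      · have h1 : rhoMap k₀ v S s C p' k = k₀ := by simp [rhoMap, hk, hb]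
        have h2 : rhoMap k₀ v S s C p' k₀ = v := by simp [rhoMap]
        have hpv : p' k = v := hC k hb
        rw [hpv] at hrec
        exact reaches_step h1 (reaches_step h2 hrec)
      · refine reaches_step ?_ hrec
        simp only [rhoMap, if_neg hk, if_neg hb]

section ContrBij

variable {V S : Finset (Fin (n+1))} {s : Fin (n+1) → Fin (n+1)} {k₀ v : Fin (n+1)}

lemma piMap_mem (h0V : 0 ∈ V) (hk₀V : k₀ ∈ V) (hk₀0 : k₀ ≠ 0)
    (hSV : S ⊆ V) (hk₀S : k₀ ∉ S) (hvV : v ∈ V) (hvk : v ≠ k₀) (hsk₀ : s k₀ = v)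
    {p : Fin (n+1) → Fin (n+1)} (hp : p ∈ F V (insert k₀ S) s) :
    piMap k₀ v p ∈ F (V.erase k₀) S (fun k => if s k = k₀ then v else s k) := by
  obtain ⟨⟨h0, hout, hmaps, hreach⟩, hforced⟩ := mem_F_iff.mp hp
  have hpk₀ : p k₀ = v := by rw [hforced k₀ (mem_insert_self _ _), hsk₀]
  refine mem_F_iff.mpr ⟨⟨?_, ?_, ?_, ?_⟩, ?_⟩
  · simp [piMap, Ne.symm hk₀0, h0, hk₀0]
  · intro k hk
    rcases (by by_cases h : k = k₀ <;> simp [h] at hk ⊢; exact hk :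
        k = k₀ ∨ k ∉ V) with h | h
    · simp [piMap, h]
    · have : p k = k := hout k h
      have hkk₀ : k ≠ k₀ := fun e => h (e ▸ hk₀V)
      simp [piMap, hkk₀, this, hkk₀]
  · intro k hk
    have hkV : k ∈ V := mem_of_mem_erase hk
    have hkk₀ : k ≠ k₀ := ne_of_mem_erase hk
    by_cases hpk : p k = k₀
    · simpa [piMap, hkk₀, hpk] using mem_erase.mpr ⟨hvk, hvV⟩
    · simpa [piMap, hkk₀, hpk] using mem_erase.mpr ⟨hpk, hmaps k hkV⟩
  · intro k hk
    obtain ⟨m, hm⟩ := hreach k (mem_of_mem_erase hk)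
    exact reaches_piMap hk₀0 hvk hpk₀ m k hm (ne_of_mem_erase hk)
  · intro k hk
    have hkk₀ : k ≠ k₀ := fun e => hk₀S (e ▸ hk)
    have : p k = s k := hforced k (mem_insert_of_mem hk)
    by_cases h : s k = k₀ <;> simp [piMap, hkk₀, this, h]

lemma rhoMap_mem (h0V : 0 ∈ V) (hk₀V : k₀ ∈ V) (hk₀0 : k₀ ≠ 0)
    (hSV : S ⊆ V) (h0S : 0 ∉ S) (hk₀S : k₀ ∉ S) (hvV : v ∈ V) (hvk : v ≠ k₀)
    (hsk₀ : s k₀ = v)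
    {p' : Fin (n+1) → Fin (n+1)} {C : Finset (Fin (n+1))}
    (hp' : p' ∈ F (V.erase k₀) S (fun k => if s k = k₀ then v else s k))
    (hC : C ⊆ (V \ insert 0 (insert k₀ S)).filter (fun k => p' k = v)) :
    rhoMap k₀ v S s C p' ∈ F V (insert k₀ S) s := by
  obtain ⟨⟨h0, hout, hmaps, hreach⟩, hforced⟩ := mem_F_iff.mp hp'
  have hp'k₀ : p' k₀ = k₀ := hout k₀ (by simp)
  have hCD : ∀ k ∈ C, k ∈ V ∧ k ≠ 0 ∧ k ≠ k₀ ∧ k ∉ S ∧ p' k = v := by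
    intro k hk
    have := hC hk
    simp only [mem_filter, mem_sdiff, mem_insert, not_or] at this
    tauto
  have hbranch : ∀ k, (k ∈ C ∨ (k ∈ S ∧ s k = k₀)) → p' k = v := by
    rintro k (hk | ⟨hkS, hsk⟩)
    · exact (hCD k hk).2.2.2.2
    · rw [hforced k hkS, if_pos hsk]
  refine mem_F_iff.mpr ⟨⟨?_, ?_, ?_, ?_⟩, ?_⟩
  · have h0C : (0 : Fin (n+1)) ∉ C := fun h => ((hCD 0 h).2.1) rfl
    simp [rhoMap, Ne.symm hk₀0, h0C, h0S, h0]
  · intro k hk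
    have hkk₀ : k ≠ k₀ := fun e => hk (e ▸ hk₀V)
    have hkC : k ∉ C := fun h => hk ((hCD k h).1)
    have hkS : k ∉ S := fun h => hk (hSV h)
    have : p' k = k := hout k (by simp [hk, hkk₀])
    simp [rhoMap, hkk₀, hkC, hkS, this]
  · intro k hk
    by_cases hkk₀ : k = k₀
    · simpa [rhoMap, hkk₀] using hvV
    · by_cases hb : k ∈ C ∨ (k ∈ S ∧ s k = k₀)
      · simpa [rhoMap, hkk₀, hb] using hk₀V
      · have : p' k ∈ V.erase k₀ := hmaps k (mem_erase.mpr ⟨hkk₀, hk⟩)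
        simpa [rhoMap, hkk₀, hb] using mem_of_mem_erase this
  · intro k hk
    by_cases hkk₀ : k = k₀
    · obtain ⟨m, hm⟩ := hreach v (mem_erase.mpr ⟨hvk, hvV⟩)
      have hv : Reaches (rhoMap k₀ v S s C p') v :=
        reaches_rhoMap hp'k₀ hk₀0 hbranch m v hm
      exact reaches_step (by simp [rhoMap, hkk₀]) hv
    · obtain ⟨m, hm⟩ := hreach k (mem_erase.mpr ⟨hkk₀, hk⟩)
      exact reaches_rhoMap hp'k₀ hk₀0 hbranch m k hm
  · intro k hk
    rcases mem_insert.mp hk with hkk₀ | hkS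
    · simp [rhoMap, hkk₀, hsk₀]
    · have hkk₀ : k ≠ k₀ := fun e => hk₀S (e ▸ hkS)
      by_cases hsk : s k = k₀
      · simp [rhoMap, hkk₀, hkS, hsk]
      · have hkC : k ∉ C := fun h => (hCD k h).2.2.2.1 hkS
        have : p' k = s k := by rw [hforced k hkS, if_neg hsk]
        simp [rhoMap, hkk₀, hkC, hkS, hsk, this]

lemma rho_pi (hk₀0 : k₀ ≠ 0) (hk₀S : k₀ ∉ S)
    {p : Fin (n+1) → Fin (n+1)} (hp : p ∈ F V (insert k₀ S) s) (hsk₀ : s k₀ = v) :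
    rhoMap k₀ v S s ((V \ insert 0 (insert k₀ S)).filter (fun k => p k = k₀))
      (piMap k₀ v p) = p := by
  obtain ⟨⟨h0, hout, hmaps, hreach⟩, hforced⟩ := mem_F_iff.mp hp
  have hpk₀ : p k₀ = v := by rw [hforced k₀ (mem_insert_self _ _), hsk₀]
  funext k
  by_cases hkk₀ : k = k₀
  · simp [rhoMap, hkk₀, hpk₀]
  · by_cases hpk : p k = k₀
    · have hb : k ∈ (V \ insert 0 (insert k₀ S)).filter (fun k => p k = k₀) ∨
          (k ∈ S ∧ s k = k₀) := by
        by_cases hkD : k ∈ V \ insert 0 (insert k₀ S)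
        · exact Or.inl (mem_filter.mpr ⟨hkD, hpk⟩)
        · right
          have hkV : k ∈ V := by
            by_contra hkV
            exact hkk₀ ((hout k hkV).symm.trans hpk)
          have hk0 : k ≠ 0 := by
            intro e
            rw [e, h0] at hpk
            exact hk₀0 hpk.symm
          have hkS : k ∈ S := by
            by_contra hkS
            exact hkD (mem_sdiff.mpr ⟨hkV, by simp [hk0, hkk₀, hkS]⟩)
          exact ⟨hkS, by rw [← hforced k (mem_insert_of_mem hkS), hpk]⟩
      simp only [rhoMap, if_neg hkk₀, if_pos hb]
      exact hpk.symm
    · have hb : ¬(k ∈ (V \ insert 0 (insert k₀ S)).filter (fun k => p k = k₀) ∨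
          (k ∈ S ∧ s k = k₀)) := by
        rintro (h | ⟨hkS, hsk⟩)
        · exact hpk (mem_filter.mp h).2
        · exact hpk (by rw [hforced k (mem_insert_of_mem hkS), hsk])
      simp only [rhoMap, if_neg hkk₀, if_neg hb, piMap, if_neg hkk₀, if_neg hpk]

lemma pi_rho (hk₀V : k₀ ∈ V) (hk₀0 : k₀ ≠ 0) (hSV : S ⊆ V) (hk₀S : k₀ ∉ S)
    {p' : Fin (n+1) → Fin (n+1)} {C : Finset (Fin (n+1))}
    (hp' : p' ∈ F (V.erase k₀) S (fun k => if s k = k₀ then v else s k))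
    (hC : C ⊆ (V \ insert 0 (insert k₀ S)).filter (fun k => p' k = v)) :
    piMap k₀ v (rhoMap k₀ v S s C p') = p' ∧
    (V \ insert 0 (insert k₀ S)).filter (fun k => rhoMap k₀ v S s C p' k = k₀) = C := by
  obtain ⟨⟨h0, hout, hmaps, hreach⟩, hforced⟩ := mem_F_iff.mp hp'
  have hp'k₀ : p' k₀ = k₀ := hout k₀ (by simp)
  have hCD : ∀ k ∈ C, k ∈ V \ insert 0 (insert k₀ S) ∧ p' k = v := by
    intro k hk
    have := hC hk
    simpa using mem_filter.mp this
  have hbranch : ∀ k, (k ∈ C ∨ (k ∈ S ∧ s k = k₀)) → p' k = v := by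
    rintro k (hk | ⟨hkS, hsk⟩)
    · exact (hCD k hk).2
    · rw [hforced k hkS, if_pos hsk]
  have hp'ne : ∀ k, k ≠ k₀ → p' k ≠ k₀ := by
    intro k hkk₀
    by_cases hkV : k ∈ V
    · exact ne_of_mem_erase (hmaps k (mem_erase.mpr ⟨hkk₀, hkV⟩))
    · rw [hout k (by simp [hkV])]
      exact hkk₀
  constructor
  · funext k
    by_cases hkk₀ : k = k₀
    · rw [hkk₀]
      simp [piMap, hp'k₀]
    · by_cases hb : k ∈ C ∨ (k ∈ S ∧ s k = k₀)
      · have h1 : rhoMap k₀ v S s C p' k = k₀ := by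
          simp only [rhoMap, if_neg hkk₀, if_pos hb]
        simp only [piMap, if_neg hkk₀, h1, if_pos rfl]
        exact (hbranch k hb).symm
      · have h1 : rhoMap k₀ v S s C p' k = p' k := by
          simp only [rhoMap, if_neg hkk₀, if_neg hb]
        simp only [piMap, if_neg hkk₀, h1, if_neg (hp'ne k hkk₀)]
  · ext k
    simp only [mem_filter]
    constructor
    · rintro ⟨hkD, hrho⟩
      have hkk₀ : k ≠ k₀ := by
        simp only [mem_sdiff, mem_insert, not_or] at hkD
        exact hkD.2.2.1
      have hkS : k ∉ S := by
        simp only [mem_sdiff, mem_insert, not_or] at hkD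
        exact hkD.2.2.2
      by_cases hb : k ∈ C ∨ (k ∈ S ∧ s k = k₀)
      · rcases hb with h | ⟨h, _⟩
        · exact h
        · exact absurd h hkS
      · rw [rhoMap] at hrho
        simp only [if_neg hkk₀, if_neg hb] at hrho
        exact absurd hrho (hp'ne k hkk₀)
    · intro hk
      have h1 := hCD k hk
      have hkk₀ : k ≠ k₀ := by
        have := h1.1
        simp only [mem_sdiff, mem_insert, not_or] at this
        exact this.2.2.1
      refine ⟨h1.1, ?_⟩
      simp only [rhoMap, if_neg hkk₀, if_pos (Or.inl hk)]

lemma contr (h0V : 0 ∈ V) (hk₀V : k₀ ∈ V) (hk₀0 : k₀ ≠ 0) (hSV : S ⊆ V)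
    (h0S : 0 ∉ S) (hk₀S : k₀ ∉ S) (hvV : s k₀ ∈ V) (hvk : s k₀ ≠ k₀)
    (x : Fin (n+1) → ℕ) :
    T V (insert k₀ S) s x
      = T (V.erase k₀) S (fun k => if s k = k₀ then s k₀ else s k)
          (fun u => if u = s k₀ then x (s k₀) + x k₀ else x u) := by
  classical
  set v := s k₀ with hv
  have hsk₀ : s k₀ = v := rfl
  set D := V \ insert 0 (insert k₀ S) with hD
  have hD' : (V.erase k₀) \ insert 0 S = D := by
    ext k
    simp only [hD, mem_sdiff, mem_erase, mem_insert, not_or]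
    tauto
  rw [T, T, hD']
  have hmapsto : ∀ p ∈ F V (insert k₀ S) s,
      piMap k₀ v p ∈ F (V.erase k₀) S (fun k => if s k = k₀ then v else s k) :=
    fun p hp => piMap_mem h0V hk₀V hk₀0 hSV hk₀S hvV hvk hsk₀ hp
  rw [← Finset.sum_fiberwise_of_maps_to hmapsto]
  refine Finset.sum_congr rfl ?_
  intro p' hp'
  -- inner fiber sum
  have step2 : ∑ p ∈ (F V (insert k₀ S) s).filter (fun p => piMap k₀ v p = p'),
        ∏ k ∈ D, x (p k)
      = ∑ C ∈ (D.filter (fun k => p' k = v)).powerset,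
          ∏ k ∈ D, x (rhoMap k₀ v S s C p' k) := by
    refine Finset.sum_nbij' (fun p => D.filter (fun k => p k = k₀))
      (fun C => rhoMap k₀ v S s C p') ?_ ?_ ?_ ?_ ?_
    · intro p hp
      rw [Finset.mem_filter] at hp
      rw [Finset.mem_powerset]
      intro k hk
      rw [Finset.mem_filter] at hk ⊢
      refine ⟨hk.1, ?_⟩
      have hkk₀ : k ≠ k₀ := by
        have := hk.1
        rw [hD] at this
        simp only [mem_sdiff, mem_insert, not_or] at this
        exact this.2.2.1
      rw [← hp.2]
      simp only [piMap, if_neg hkk₀, if_pos hk.2]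
    · intro C hCmem
      rw [Finset.mem_powerset] at hCmem
      rw [Finset.mem_filter]
      exact ⟨rhoMap_mem h0V hk₀V hk₀0 hSV h0S hk₀S hvV hvk hsk₀ hp' hCmem,
        (pi_rho hk₀V hk₀0 hSV hk₀S hp' hCmem).1⟩
    · intro p hp
      rw [Finset.mem_filter] at hp
      have := rho_pi hk₀0 hk₀S hp.1 hsk₀
      rw [← hp.2]
      exact this
    · intro C hCmem
      rw [Finset.mem_powerset] at hCmem
      exact (pi_rho hk₀V hk₀0 hSV hk₀S hp' hCmem).2
    · intro p hp
      rw [Finset.mem_filter] at hp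
      have hrp := rho_pi hk₀0 hk₀S hp.1 hsk₀
      refine Finset.prod_congr rfl ?_
      intro k _
      conv_lhs => rw [← hrp]
      rw [← hp.2]
  rw [step2]
  -- evaluate the powerset sum
  set ch := D.filter (fun k => p' k = v) with hch
  have hchD : ch ⊆ D := Finset.filter_subset _ _
  obtain ⟨⟨h0', hout', hmaps', hreach'⟩, hforced'⟩ := mem_F_iff.mp hp'
  have hrho_eq : ∀ C ∈ ch.powerset, ∀ k ∈ D,
      rhoMap k₀ v S s C p' k = if k ∈ C then k₀ else p' k := by
    intro C _ k hk
    rw [hD] at hk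
    simp only [mem_sdiff, mem_insert, not_or] at hk
    have hkS : k ∉ S := hk.2.2.2
    have hkk₀ : k ≠ k₀ := hk.2.2.1
    by_cases hkC : k ∈ C
    · simp only [rhoMap, if_neg hkk₀, if_pos (Or.inl hkC), if_pos hkC]
    · have : ¬(k ∈ C ∨ (k ∈ S ∧ s k = k₀)) := by tauto
      simp only [rhoMap, if_neg hkk₀, if_neg this, if_neg hkC]
  calc ∑ C ∈ ch.powerset, ∏ k ∈ D, x (rhoMap k₀ v S s C p' k)
      = ∑ C ∈ ch.powerset, (∏ k ∈ C, x k₀) * ∏ k ∈ D \ C, x (p' k) := by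
        refine Finset.sum_congr rfl ?_
        intro C hCmem
        rw [Finset.mem_powerset] at hCmem
        have hCD : C ⊆ D := hCmem.trans hchD
        rw [← Finset.prod_sdiff hCD]
        rw [mul_comm]
        congr 1
        · refine Finset.prod_congr rfl fun k hk => ?_
          rw [hrho_eq C (Finset.mem_powerset.mpr hCmem) k (hCD hk), if_pos hk]
        · refine Finset.prod_congr rfl fun k hk => ?_
          rw [hrho_eq C (Finset.mem_powerset.mpr hCmem) k (mem_sdiff.mp hk).1,
            if_neg (mem_sdiff.mp hk).2]
    _ = ∏ k ∈ D, (if p' k = v then x (p' k) + x k₀ else x (p' k)) := by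
        rw [← Finset.prod_sdiff hchD]
        have h1 : ∀ k ∈ D \ ch, (if p' k = v then x (p' k) + x k₀ else x (p' k))
            = x (p' k) := by
          intro k hk
          rw [if_neg]
          intro h
          exact (mem_sdiff.mp hk).2 (mem_filter.mpr ⟨(mem_sdiff.mp hk).1, h⟩)
        have h2 : ∀ k ∈ ch, (if p' k = v then x (p' k) + x k₀ else x (p' k))
            = x k₀ + x v := by
          intro k hk
          have hpv := (mem_filter.mp hk).2
          rw [if_pos hpv, hpv, add_comm]
        rw [Finset.prod_congr rfl h1, Finset.prod_congr rfl h2, Finset.prod_add,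
          Finset.mul_sum]
        refine Finset.sum_congr rfl fun C hCm => ?_
        have hCch : C ⊆ ch := Finset.mem_powerset.mp hCm
        have hsplit : D \ C = (D \ ch) ∪ (ch \ C) := by
          ext k
          simp only [mem_sdiff, mem_union]
          constructor
          · rintro ⟨hkD, hkC⟩
            by_cases h : k ∈ ch
            · exact Or.inr ⟨h, hkC⟩
            · exact Or.inl ⟨hkD, h⟩
          · rintro (⟨hkD, _⟩ | ⟨hkch, hkC⟩)
            · exact ⟨hkD, fun h => ‹k ∉ ch› (hCch h)⟩
            · exact ⟨hchD hkch, hkC⟩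
        have hdisj : Disjoint (D \ ch) (ch \ C) := by
          rw [Finset.disjoint_left]
          intro k h1' h2'
          exact (mem_sdiff.mp h1').2 (mem_sdiff.mp h2').1
        rw [hsplit, Finset.prod_union hdisj]
        have h3 : ∏ k ∈ ch \ C, x (p' k) = ∏ k ∈ ch \ C, x v :=
          Finset.prod_congr rfl fun k hk => by
            rw [(mem_filter.mp (mem_sdiff.mp hk).1).2]
        rw [h3]
        ring
    _ = ∏ k ∈ D, (fun u => if u = v then x v + x k₀ else x u) (p' k) := by
        refine Finset.prod_congr rfl fun k _ => ?_
        by_cases h : p' k = v <;> simp [h]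

end ContrBij

lemma F_filter_eq (V : Finset (Fin (n+1))) (s : Fin (n+1) → Fin (n+1))
    (k₀ v : Fin (n+1)) :
    (F V ∅ s).filter (fun p => p k₀ = v) = F V {k₀} (fun _ => v) := by
  ext p
  simp only [Finset.mem_filter, mem_F_iff, Finset.notMem_empty, Finset.mem_singleton]
  constructor
  · rintro ⟨⟨h, _⟩, h2⟩
    exact ⟨h, fun k hk => hk ▸ h2⟩
  · rintro ⟨h, h2⟩
    exact ⟨⟨h, fun k hk => hk.elim⟩, h2 k₀ rfl⟩

lemma lemmaW : ∀ (m : ℕ) (V : Finset (Fin (n+1))) (s : Fin (n+1) → Fin (n+1))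
    (x : Fin (n+1) → ℕ), V.card = m + 2 → 0 ∈ V →
    T V ∅ s x = x 0 * (∑ v ∈ V, x v) ^ m := by
  intro m
  induction m with
  | zero =>
    intro V s x hcard h0V
    have hea : (V.erase 0).card = 1 := by
      rw [Finset.card_erase_of_mem h0V, hcard]
    obtain ⟨a, ha⟩ := Finset.card_eq_one.mp hea
    have haV : a ∈ V.erase 0 := ha ▸ Finset.mem_singleton_self a
    have ha0 : a ≠ 0 := Finset.ne_of_mem_erase haV
    have haV' : a ∈ V := Finset.mem_of_mem_erase haV
    have hV : V = {0, a} := by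
      rw [← Finset.insert_erase h0V, ha]
    have hFeq : F V ∅ s = {fun k => if k = a then 0 else k} := by
      ext p
      simp only [mem_F_iff, Finset.notMem_empty, Finset.mem_singleton]
      constructor
      · rintro ⟨⟨h0, hout, hmaps, hreach⟩, _⟩
        funext k
        by_cases hk : k = a
        · subst hk
          have h1 : p k ∈ V := hmaps k haV'
          have h2 : p k ≠ k := forest_ne_self ⟨h0, hout, hmaps, hreach⟩ haV' ha0
          rw [hV] at h1
          simp only [Finset.mem_insert, Finset.mem_singleton] at h1
          simp only [if_pos rfl]
          tauto
        · by_cases hk0 : k = 0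
          · subst hk0; simp [hk, h0]
          · have : k ∉ V := by
              rw [hV]
              simp [hk, hk0]
            simp [hk, hout k this]
      · intro hp
        subst hp
        refine ⟨⟨by simp [ha0.symm ∘ Eq.symm], ?_, ?_, ?_⟩, fun k hk => hk.elim⟩
        · intro k hk
          have : k ≠ a := fun e => hk (e ▸ haV')
          simp [this]
        · intro k hk
          by_cases h : k = a <;> simp [h, h0V, hk]
        · intro k hk
          rw [hV] at hk
          simp only [Finset.mem_insert, Finset.mem_singleton] at hk
          rcases hk with hk | hk
          · subst hk
            exact ⟨0, by simp [ha0.symm ∘ Eq.symm]⟩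
          · subst hk
            exact ⟨1, by simp⟩
    rw [T, hFeq]
    have : V \ insert 0 ∅ = {a} := by
      rw [hV]
      ext k
      simp only [Finset.mem_sdiff, Finset.mem_insert, Finset.mem_singleton,
        Finset.notMem_empty, or_false]
      constructor
      · rintro ⟨h1 | h1, h2⟩ <;> tauto
      · intro h; subst h; exact ⟨Or.inr rfl, ha0⟩
    rw [this]
    simp
  | succ m IH =>
    intro V s x hcard h0V
    have harith : m + 1 + 2 - 1 = m + 2 := by omega
    have hne : (V.erase 0).Nonempty := by
      rw [← Finset.card_pos, Finset.card_erase_of_mem h0V, hcard]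
      omega
    obtain ⟨k₀, hk₀⟩ := hne
    have hk₀V : k₀ ∈ V := Finset.mem_of_mem_erase hk₀
    have hk₀0 : k₀ ≠ 0 := Finset.ne_of_mem_erase hk₀
    have hins : V \ insert 0 (∅ : Finset (Fin (n+1))) = V.erase 0 := by
      ext k; simp [Finset.mem_erase, Finset.mem_sdiff, and_comm]
    have hsplit : ∀ p : Fin (n+1) → Fin (n+1), ∏ k ∈ V \ insert 0 (∅ : Finset (Fin (n+1))), x (p k)
        = x (p k₀) * ∏ k ∈ V \ insert 0 ({k₀} : Finset (Fin (n+1))), x (p k) := by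
      intro p
      rw [hins, ← Finset.mul_prod_erase _ _ hk₀]
      have hset : (V.erase 0).erase k₀ = V \ insert 0 ({k₀} : Finset (Fin (n+1))) := by
        ext k
        simp only [Finset.mem_erase, Finset.mem_sdiff, Finset.mem_insert,
          Finset.mem_singleton, not_or]
        tauto
      rw [hset]
    have hmapsto : ∀ p ∈ F V ∅ s, p k₀ ∈ V.erase k₀ := by
      intro p hp
      obtain ⟨hf, _⟩ := mem_F_iff.mp hp
      exact Finset.mem_erase.mpr ⟨forest_ne_self hf hk₀V hk₀0, hf.2.2.1 k₀ hk₀V⟩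
    rw [T]
    rw [Finset.sum_congr rfl (fun p _ => hsplit p)]
    rw [← Finset.sum_fiberwise_of_maps_to hmapsto]
    have hinner : ∀ v ∈ V.erase k₀,
        (∑ p ∈ (F V ∅ s).filter (fun p => p k₀ = v),
          x (p k₀) * ∏ k ∈ V \ insert 0 ({k₀} : Finset (Fin (n+1))), x (p k))
        = x v * ((if (0:Fin (n+1)) = v then x v + x k₀ else x 0) *
            (∑ u ∈ V, x u) ^ m) := by
      intro v hv
      have hvV : v ∈ V := Finset.mem_of_mem_erase hv
      have hvk₀ : v ≠ k₀ := Finset.ne_of_mem_erase hv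
      rw [F_filter_eq]
      have : ∀ p ∈ F V {k₀} (fun _ => v),
          x (p k₀) * ∏ k ∈ V \ insert 0 ({k₀} : Finset (Fin (n+1))), x (p k)
          = x v * ∏ k ∈ V \ insert 0 ({k₀} : Finset (Fin (n+1))), x (p k) := by
        intro p hp
        rw [(mem_F_iff.mp hp).2 k₀ (Finset.mem_singleton_self k₀)]
      rw [Finset.sum_congr rfl this, ← Finset.mul_sum]
      congr 1
      have hTT : (∑ p ∈ F V {k₀} (fun _ => v),
          ∏ k ∈ V \ insert 0 ({k₀} : Finset (Fin (n+1))), x (p k))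
          = T V (insert k₀ ∅) (fun _ => v) x := by
        rw [T]
        rfl
      have e1 : T V (insert k₀ ∅) (fun _ => v) x
          = T (V.erase k₀) ∅ (fun _ => if v = k₀ then v else v)
              (fun u => if u = v then x v + x k₀ else x u) :=
        contr h0V hk₀V hk₀0 (Finset.empty_subset V)
          (Finset.notMem_empty 0) (Finset.notMem_empty k₀) hvV hvk₀ x
      have hcard' : (V.erase k₀).card = m + 2 := by
        rw [Finset.card_erase_of_mem hk₀V, hcard]
        exact harith
      have e2 := IH (V.erase k₀) (fun _ => if v = k₀ then v else v)
        (fun u => if u = v then x v + x k₀ else x u) hcard'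
        (Finset.mem_erase.mpr ⟨Ne.symm hk₀0, h0V⟩)
      rw [hTT, e1, e2]
      have hsum : (∑ u ∈ V.erase k₀, if u = v then x v + x k₀ else x u)
          = ∑ u ∈ V, x u := by
        have h1 : ∀ u ∈ V.erase k₀, (if u = v then x v + x k₀ else x u)
            = x u + (if u = v then x k₀ else 0) := by
          intro u _
          by_cases h : u = v <;> simp [h]
        rw [Finset.sum_congr rfl h1, Finset.sum_add_distrib,
          Finset.sum_ite_eq' (V.erase k₀) v (fun _ => x k₀), if_pos hv,
          Finset.sum_erase_add _ _ hk₀V]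
      rw [hsum]
    rw [Finset.sum_congr rfl hinner]
    have h0e : (0:Fin (n+1)) ∈ V.erase k₀ := Finset.mem_erase.mpr ⟨Ne.symm hk₀0, h0V⟩
    have : ∀ v ∈ V.erase k₀,
        x v * ((if (0:Fin (n+1)) = v then x v + x k₀ else x 0) * (∑ u ∈ V, x u) ^ m)
        = (x v * x 0 + if v = 0 then x 0 * x k₀ else 0) * (∑ u ∈ V, x u) ^ m := by
      intro v _
      by_cases h : v = 0
      · subst h
        rw [if_pos rfl, if_pos rfl]
        ring
      · rw [if_neg (fun e => h e.symm), if_neg h]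
        ring
    rw [Finset.sum_congr rfl this, ← Finset.sum_mul]
    have hfin : (∑ v ∈ V.erase k₀, (x v * x 0 + if v = 0 then x 0 * x k₀ else 0))
        = x 0 * ∑ u ∈ V, x u := by
      rw [Finset.sum_add_distrib,
        Finset.sum_ite_eq' (V.erase k₀) 0 (fun _ => x 0 * x k₀), if_pos h0e]
      have h1 : ∑ v ∈ V.erase k₀, x v * x 0 = (∑ v ∈ V.erase k₀, x v) * x 0 := by
        rw [Finset.sum_mul]
      rw [h1]
      have h2 : (∑ v ∈ V.erase k₀, x v) + x k₀ = ∑ u ∈ V, x u :=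
        Finset.sum_erase_add _ _ hk₀V
      calc (∑ v ∈ V.erase k₀, x v) * x 0 + x 0 * x k₀
          = ((∑ v ∈ V.erase k₀, x v) + x k₀) * x 0 := by ring
        _ = x 0 * ∑ u ∈ V, x u := by rw [h2]; ring
    rw [hfin]
    ring

lemma sum_update (V : Finset (Fin (n+1))) (k₀ v : Fin (n+1)) (x : Fin (n+1) → ℕ)
    (hv : v ∈ V.erase k₀) (hk₀V : k₀ ∈ V) :
    (∑ u ∈ V.erase k₀, if u = v then x v + x k₀ else x u) = ∑ u ∈ V, x u := by
  have h1 : ∀ u ∈ V.erase k₀, (if u = v then x v + x k₀ else x u)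
      = x u + (if u = v then x k₀ else 0) := by
    intro u _
    by_cases h : u = v <;> simp [h]
  rw [Finset.sum_congr rfl h1, Finset.sum_add_distrib,
    Finset.sum_ite_eq' (V.erase k₀) v (fun _ => x k₀), if_pos hv,
    Finset.sum_erase_add _ _ hk₀V]

lemma lemmaM : ∀ (j : ℕ) (V S : Finset (Fin (n+1))) (s : Fin (n+1) → Fin (n+1))
    (x : Fin (n+1) → ℕ), S.card = j → 0 ∈ V → S ⊆ V → 0 ∉ S →
    (∀ k ∈ S, s k ∈ V ∧ (k : ℕ) < (s k : ℕ)) → S.card + 2 ≤ V.card →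
    T V S s x = x 0 * (∑ v ∈ V, x v) ^ (V.card - S.card - 2) := by
  intro j
  induction j with
  | zero =>
    intro V S s x hSc h0V hSV h0S hs hcard
    rw [Finset.card_eq_zero.mp hSc] at *
    rw [lemmaW (V.card - 2) V s x (by omega) h0V]
    congr 1
  | succ j IH =>
    intro V S s x hSc h0V hSV h0S hs hcard
    have hSne : S.Nonempty := Finset.card_pos.mp (by omega)
    obtain ⟨k₀, hk₀S⟩ := hSne
    have hk₀V : k₀ ∈ V := hSV hk₀S
    have hk₀0 : k₀ ≠ 0 := fun e => h0S (e ▸ hk₀S)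
    have hlt : (k₀ : ℕ) < (s k₀ : ℕ) := (hs k₀ hk₀S).2
    have hvV : s k₀ ∈ V := (hs k₀ hk₀S).1
    have hvk₀ : s k₀ ≠ k₀ := fun e => by rw [e] at hlt; omega
    have hv0 : s k₀ ≠ 0 := fun e => by rw [e] at hlt; simp at hlt
    have hSE : insert k₀ (S.erase k₀) = S := Finset.insert_erase hk₀S
    have hc1 : T V S s x = T V (insert k₀ (S.erase k₀)) s x := by rw [hSE]
    rw [hc1, contr h0V hk₀V hk₀0 ((Finset.erase_subset _ _).trans hSV)
      (fun h => h0S (Finset.mem_of_mem_erase h)) (Finset.notMem_erase k₀ S)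
      hvV hvk₀ x]
    have hcardS : (S.erase k₀).card = j := by
      have h := Finset.card_erase_of_mem hk₀S
      omega
    have hcardV : (V.erase k₀).card = V.card - 1 := Finset.card_erase_of_mem hk₀V
    rw [IH (V.erase k₀) (S.erase k₀) (fun k => if s k = k₀ then s k₀ else s k)
      (fun u => if u = s k₀ then x (s k₀) + x k₀ else x u) hcardS
      (Finset.mem_erase.mpr ⟨Ne.symm hk₀0, h0V⟩)
      (fun k hk => Finset.mem_erase.mpr
        ⟨Finset.ne_of_mem_erase hk, hSV (Finset.mem_of_mem_erase hk)⟩)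
      (fun h => h0S (Finset.mem_of_mem_erase h)) ?_ ?_]
    · have hs0 : (if (0 : Fin (n+1)) = s k₀ then x (s k₀) + x k₀ else x 0) = x 0 :=
        if_neg (fun e => hv0 e.symm)
      rw [hs0, sum_update V k₀ (s k₀) x (Finset.mem_erase.mpr ⟨hvk₀, hvV⟩) hk₀V]
      have hexp : (V.erase k₀).card - (S.erase k₀).card - 2 = V.card - S.card - 2 := by
        rw [hcardV, hSc, hcardS]
        omega
      rw [hexp]
    · intro k hk
      have hkS : k ∈ S := Finset.mem_of_mem_erase hk
      have hkk₀ : k ≠ k₀ := Finset.ne_of_mem_erase hk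
      by_cases h : s k = k₀
      · rw [if_pos h]
        refine ⟨Finset.mem_erase.mpr ⟨hvk₀, hvV⟩, ?_⟩
        have := (hs k hkS).2
        rw [h] at this
        omega
      · rw [if_neg h]
        exact ⟨Finset.mem_erase.mpr ⟨h, (hs k hkS).1⟩, (hs k hkS).2⟩
    · rw [hcardS, hcardV]
      omega

noncomputable def N (S A : Finset (Fin (n+1))) (s : Fin (n+1) → Fin (n+1)) : ℕ :=
  (Finset.univ.filter (fun p : Fin (n+1) → Fin (n+1) =>
     ForestOn Finset.univ p ∧ (∀ k ∈ S, p k = s k) ∧ ∀ k ∈ A, (k:ℕ) < (p k : ℕ))).card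

lemma card_bound (hn : 1 ≤ n) (S : Finset (Fin (n+1)))
    (h0S : 0 ∉ S) (hs : ∀ k ∈ S, ∃ u : Fin (n+1), (k:ℕ) < (u : ℕ)) :
    S.card ≤ n - 1 := by
  have hsub : S ⊆ (Finset.univ.erase 0).erase (Fin.last n) := by
    intro k hk
    refine Finset.mem_erase.mpr ⟨?_, Finset.mem_erase.mpr
      ⟨fun e => h0S (e ▸ hk), Finset.mem_univ k⟩⟩
    obtain ⟨u, hu⟩ := hs k hk
    intro e
    rw [e] at hu
    simp only [Fin.val_last] at hu
    omega
  have := Finset.card_le_card hsub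
  have h1 : (Finset.univ.erase (0 : Fin (n+1))).card = n := by
    rw [Finset.card_erase_of_mem (Finset.mem_univ _), Finset.card_univ,
      Fintype.card_fin]
    omega
  have h2 := Finset.card_erase_of_mem (a := Fin.last n)
    (s := Finset.univ.erase (0 : Fin (n+1)))
    (Finset.mem_erase.mpr ⟨by
      intro e
      have := congrArg Fin.val e
      simp only [Fin.val_last, Fin.val_zero] at this
      omega, Finset.mem_univ _⟩)
  omega

lemma lemmaM2 : ∀ (a : ℕ) (S A : Finset (Fin (n+1))) (s : Fin (n+1) → Fin (n+1)),
    1 ≤ n → A.card = a → 0 ∉ S → 0 ∉ A → Disjoint S A →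
    (∀ k ∈ S, (k:ℕ) < (s k : ℕ)) →
    N S A s = (n+1) ^ (n - 1 - S.card - A.card) * ∏ k ∈ A, (n - (k:ℕ)) := by
  intro a
  induction a with
  | zero =>
    intro S A s hn hAc h0S h0A hdisj hs
    rw [Finset.card_eq_zero.mp hAc] at *
    have hNF : N S ∅ s = (F Finset.univ S s).card := by
      unfold N F
      congr 1
      apply Finset.filter_congr
      intro p _
      simp
    have hTF : T Finset.univ S s (fun _ => 1) = (F Finset.univ S s).card := by
      unfold T
      simp
    have hM := lemmaM S.card Finset.univ S s (fun _ => 1) rfl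
      (Finset.mem_univ _) (Finset.subset_univ _) h0S
      (fun k hk => ⟨Finset.mem_univ _, hs k hk⟩) ?_
    · rw [hNF, ← hTF, hM]
      have hcu : (Finset.univ : Finset (Fin (n+1))).card = n + 1 := by
        rw [Finset.card_univ, Fintype.card_fin]
      have hsum1 : (∑ _v ∈ (Finset.univ : Finset (Fin (n+1))), 1) = n + 1 := by
        rw [Finset.sum_const, hcu]
        simp
      rw [hsum1, hcu]
      have hSb : S.card ≤ n - 1 := card_bound hn S h0S
        (fun k hk => ⟨s k, hs k hk⟩)
      have : n + 1 - S.card - 2 = n - 1 - S.card - 0 := by omega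
      rw [this]
      simp
    · have hSb : S.card ≤ n - 1 := card_bound hn S h0S
        (fun k hk => ⟨s k, hs k hk⟩)
      have hcu : (Finset.univ : Finset (Fin (n+1))).card = n + 1 := by
        rw [Finset.card_univ, Fintype.card_fin]
      omega
  | succ a IH =>
    intro S A s hn hAc h0S h0A hdisj hs
    have hAne : A.Nonempty := Finset.card_pos.mp (by omega)
    obtain ⟨k₀, hk₀A⟩ := hAne
    have hk₀0 : k₀ ≠ 0 := fun e => h0A (e ▸ hk₀A)
    have hk₀S : k₀ ∉ S := fun h => (Finset.disjoint_left.mp hdisj) h hk₀A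
    have hsplit : N S A s = ∑ v ∈ Finset.Ioi k₀,
        N (insert k₀ S) (A.erase k₀) (Function.update s k₀ v) := by
      unfold N
      rw [Finset.card_eq_sum_card_fiberwise
        (f := fun p : Fin (n+1) → Fin (n+1) => p k₀) (t := Finset.Ioi k₀) ?_]
      · refine Finset.sum_congr rfl ?_
        intro v hv
        have hk₀v : (k₀ : ℕ) < (v : ℕ) := by
          have := Finset.mem_Ioi.mp hv
          exact this
        congr 1
        rw [Finset.filter_filter]
        apply Finset.filter_congr
        intro p _
        constructor
        · rintro ⟨⟨hf, hS, hA⟩, hpv⟩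
          refine ⟨hf, ?_, ?_⟩
          · intro k hk
            rcases Finset.mem_insert.mp hk with hk | hk
            · subst hk
              rw [Function.update_self]
              exact hpv
            · have hkk₀ : k ≠ k₀ := fun e =>
                (Finset.disjoint_left.mp hdisj) hk (e ▸ hk₀A)
              rw [Function.update_of_ne hkk₀]
              exact hS k hk
          · intro k hk
            exact hA k (Finset.mem_of_mem_erase hk)
        · rintro ⟨hf, hS, hA⟩
          have hpv : p k₀ = v := by
            have := hS k₀ (Finset.mem_insert_self _ _)
            rwa [Function.update_self] at this
          refine ⟨⟨hf, ?_, ?_⟩, hpv⟩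
          · intro k hk
            have hkk₀ : k ≠ k₀ := fun e => hk₀S (e ▸ hk)
            have := hS k (Finset.mem_insert_of_mem hk)
            rwa [Function.update_of_ne hkk₀] at this
          · intro k hk
            by_cases h : k = k₀
            · subst h
              rw [hpv]
              exact hk₀v
            · exact hA k (Finset.mem_erase.mpr ⟨h, hk⟩)
      · intro p hp
        rw [Finset.mem_coe, Finset.mem_filter] at hp
        rw [Finset.mem_coe, Finset.mem_Ioi]
        exact hp.2.2.2 k₀ hk₀A
    rw [hsplit]
    have hae : (A.erase k₀).card = a := by
      have h := Finset.card_erase_of_mem hk₀A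
      omega
    have hic : (insert k₀ S).card = S.card + 1 :=
      Finset.card_insert_of_notMem hk₀S
    have hIH : ∀ v ∈ Finset.Ioi k₀,
        N (insert k₀ S) (A.erase k₀) (Function.update s k₀ v)
        = (n+1) ^ (n - 1 - S.card - (a + 1)) * ∏ k ∈ A.erase k₀, (n - (k:ℕ)) := by
      intro v hv
      have hk₀v : (k₀ : ℕ) < (v : ℕ) := by
        have h' := Finset.mem_Ioi.mp hv
        exact h'
      rw [IH (insert k₀ S) (A.erase k₀) (Function.update s k₀ v) hn hae
        (fun h => by
          rcases Finset.mem_insert.mp h with h | h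
          · exact hk₀0 h.symm
          · exact h0S h)
        (fun h => h0A (Finset.mem_of_mem_erase h))
        (Finset.disjoint_left.mpr (fun {k} hk hk' => by
          rcases Finset.mem_insert.mp hk with h | h
          · exact (Finset.notMem_erase k₀ A) (h ▸ hk')
          · exact (Finset.disjoint_left.mp hdisj) h (Finset.mem_of_mem_erase hk')))
        (fun k hk => by
          rcases Finset.mem_insert.mp hk with h | h
          · subst h
            rw [Function.update_self]
            exact hk₀v
          · have hkk₀ : k ≠ k₀ := fun e => hk₀S (e ▸ h)
            rw [Function.update_of_ne hkk₀]
            exact hs k h)]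
      congr 2
      rw [hic]
      omega
    rw [Finset.sum_congr rfl hIH, Finset.sum_const]
    have hIoi : (Finset.Ioi k₀).card = n - (k₀ : ℕ) := by
      rw [Fin.card_Ioi]
      omega
    rw [hIoi, smul_eq_mul, ← Finset.mul_prod_erase _ _ hk₀A, hAc]
    ring

lemma card_le_aux (n : ℕ) (Snat : Finset ℕ) (hS : Snat ⊆ Finset.Icc 1 n)
    (hnS : n ∉ Snat) : Snat.card ≤ n - 1 := by
  have hsub : Snat ⊆ Finset.Icc 1 (n-1) := by
    intro k hk
    have hk' := Finset.mem_Icc.mp (hS hk)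
    refine Finset.mem_Icc.mpr ⟨hk'.1, ?_⟩
    have : k ≠ n := fun e => hnS (e ▸ hk)
    omega
  have := Finset.card_le_card hsub
  rwa [Nat.card_Icc] at this

lemma pow_arith (n c X : ℕ) (hc : c ≤ n - 1) :
    (n + 1) ^ (n - 1 - 0 - c) * X * (n + 1) ^ c = (n + 1) ^ (n - 1) * X := by
  rw [mul_assoc, mul_comm X _, ← mul_assoc, ← pow_add]
  congr 2
  omega

lemma final_count (hn : 1 ≤ n) (Snat : Finset ℕ) (hS : Snat ⊆ Finset.Icc 1 n) :
    {p : Fin (n + 1) → Fin (n + 1) |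
        (p 0 = 0 ∧ ∀ k : Fin (n + 1), ∃ m : ℕ, p^[m] k = 0) ∧
          ∀ k ∈ Snat, k < ((p (Fin.ofNat (n + 1) k) : ℕ))}.ncard *
        (n + 1) ^ Snat.card =
      (n + 1) ^ (n - 1) * ∏ k ∈ Snat, (n - k) := by
  classical
  have hval : ∀ k ∈ Snat, ((Fin.ofNat (n+1) k) : ℕ) = k := by
    intro k hk
    have hk' := Finset.mem_Icc.mp (hS hk)
    rw [Fin.val_ofNat]
    exact Nat.mod_eq_of_lt (by omega)
  set S' : Finset (Fin (n+1)) := Snat.image (Fin.ofNat (n+1)) with hS'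
  have hinj : Set.InjOn (Fin.ofNat (n+1)) Snat := by
    intro k₁ h₁ k₂ h₂ he
    have := congrArg Fin.val he
    rwa [hval k₁ h₁, hval k₂ h₂] at this
  have hcard' : S'.card = Snat.card := Finset.card_image_of_injOn hinj
  have h0S' : (0 : Fin (n+1)) ∉ S' := by
    rw [hS']
    simp only [Finset.mem_image, not_exists]
    rintro k hex
    obtain ⟨hk, he⟩ := hex
    have := congrArg Fin.val he
    rw [hval k hk] at this
    have hk' := Finset.mem_Icc.mp (hS hk)
    simp only [Fin.val_zero] at this
    omega
  have hsetcard : {p : Fin (n + 1) → Fin (n + 1) |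
      (p 0 = 0 ∧ ∀ k : Fin (n + 1), ∃ m : ℕ, p^[m] k = 0) ∧
        ∀ k ∈ Snat, k < ((p (Fin.ofNat (n + 1) k) : ℕ))}.ncard = N ∅ S' id := by
    rw [Set.ncard_eq_toFinset_card', Set.toFinset_setOf]
    unfold N
    congr 1
    apply Finset.filter_congr
    intro p _
    constructor
    · rintro ⟨⟨h0, hre⟩, hlt⟩
      refine ⟨⟨h0, fun k hk => absurd (Finset.mem_univ k) (by simp [hk]), 
        fun k _ => Finset.mem_univ _, fun k _ => hre k⟩, fun k hk => (Finset.notMem_empty k hk).elim, ?_⟩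
      intro k' hk'
      rw [hS'] at hk'
      obtain ⟨k, hk, he⟩ := Finset.mem_image.mp hk'
      subst he
      rw [hval k hk]
      exact hlt k hk
    · rintro ⟨⟨h0, _, _, hre⟩, _, hlt⟩
      refine ⟨⟨h0, fun k => hre k (Finset.mem_univ k)⟩, ?_⟩
      intro k hk
      have := hlt ((Fin.ofNat (n+1) k)) (Finset.mem_image_of_mem _ hk)
      rwa [hval k hk] at this
  have hM2 := lemmaM2 S'.card ∅ S' id hn rfl (Finset.notMem_empty 0) h0S'
    (Finset.disjoint_empty_left S')
    (fun k hk => absurd hk (Finset.notMem_empty k))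
  have hprod : (∏ k ∈ S', (n - (k : ℕ))) = ∏ k ∈ Snat, (n - k) := by
    rw [hS', Finset.prod_image (fun k₁ h₁ k₂ h₂ he => hinj h₁ h₂ he)]
    exact Finset.prod_congr rfl (fun k hk => by rw [hval k hk])
  rw [hsetcard, hM2, hcard', hprod]
  by_cases hnS : n ∈ Snat
  · have hz : (∏ k ∈ Snat, (n - k)) = 0 :=
      Finset.prod_eq_zero hnS (Nat.sub_self n)
    rw [hz, mul_zero, mul_zero, zero_mul]
  · exact pow_arith n Snat.card _ (card_le_aux n Snat hS hnS)

end ForestAux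

theorem stmt7 (n : ℕ) (hn : 1 ≤ n) (S : Finset ℕ) (hS : S ⊆ Finset.Icc 1 n) :
    {p : Fin (n + 1) → Fin (n + 1) |
        IsForest p ∧ ∀ k ∈ S, k < ((p (Fin.ofNat (n + 1) k) : ℕ))}.ncard *
        (n + 1) ^ S.card =
      (n + 1) ^ (n - 1) * ∏ k ∈ S, (n - k) := by
  have := ForestAux.final_count hn S hS
  unfold IsForest
  exact this
end

section
/- Let n ≥ 1. For every integer a, Σ_p a^{d(p)} = ∏_{k=1}^{n−1} ((n − k) · a + k + 1), where the sum is over all rooted labeled forests p on n vertices and d(p) = #{ k ∈ {1,…,n} : p(k) > k } is the number of descending vertices of p. -/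
/-- The finite set of all rooted labeled forests on `n` vertices. -/
noncomputable def forestFinset (n : ℕ) : Finset (Fin (n + 1) → Fin (n + 1)) :=
  (Set.toFinite {p : Fin (n + 1) → Fin (n + 1) | IsForest p}).toFinset

open Fin.NatCast in
/-- The number of descending vertices of a forest `p`. -/
def numDescending (n : ℕ) (p : Fin (n + 1) → Fin (n + 1)) : ℕ :=
  ((Finset.Icc 1 n).filter (fun k : ℕ => k < ((p (k : Fin (n + 1)) : ℕ)))).card

open Finset Polynomial

noncomputable section
open scoped Classical

abbrev Rx := Polynomial ℤ

def excM (t : ℕ) : Matrix (Fin t) (Fin t) Rx :=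
  fun v i => if (i : ℕ) < (v : ℕ) then (X : Rx) else 1

lemma excM_det (t : ℕ) : (excM (t+1)).det = (1 - (X:Rx)) ^ t := by
  induction t with
  | zero => simp [Matrix.det_fin_one, excM]
  | succ t ih =>
    have key : (excM (t+2)).det = (1 - (X:Rx)) * (excM (t+1)).det := by
      have h01 : (0 : Fin (t+2)) ≠ (1 : Fin (t+2)) := by simp [Fin.ext_iff]
      have hdet := Matrix.det_updateRow_add_smul_self (excM (t+2)) h01 (-1 : Rx)
      set N := (excM (t+2)).updateRow 0 ((excM (t+2)) 0 + (-1 : Rx) • (excM (t+2)) 1) with hN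
      have hrow : ∀ j : Fin (t+2), N 0 j = if j = 0 then 1 - (X:Rx) else 0 := by
        intro j
        rw [hN, Matrix.updateRow_self]
        simp only [Pi.add_apply, Pi.smul_apply, smul_eq_mul, excM]
        have h0 : ¬ ((j : ℕ) < ((0 : Fin (t+2)) : ℕ)) := by simp
        rw [if_neg h0]
        by_cases hj : j = 0
        · subst hj; rw [if_pos (by simp), if_pos rfl]; ring
        · have hv : (j : ℕ) ≠ 0 := by
            intro h; exact hj (Fin.ext (by rw [h, Fin.val_zero]))
          have : ¬ ((j:ℕ) < ((1 : Fin (t+2)) : ℕ)) := by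
            simp only [Fin.val_one]; omega
          rw [if_neg this, if_neg hj]; ring
      have hsub : N.submatrix Fin.succ Fin.succ = excM (t+1) := by
        ext v i
        rw [Matrix.submatrix_apply, hN, Matrix.updateRow_ne (Fin.succ_ne_zero v)]
        simp [excM]
      rw [← hdet, Matrix.det_succ_row_zero]
      rw [Fintype.sum_eq_single (0 : Fin (t+2))]
      · rw [hrow 0, if_pos rfl]
        have : (0 : Fin (t+2)).succAbove = Fin.succ := Fin.succAbove_zero
        rw [this, hsub]
        simp
      · intro j hj
        rw [hrow j, if_neg hj]
        ring
    rw [show t+1+1 = t+2 from rfl, key, ih]; ring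

lemma sum_perm_fin (t : ℕ) :
    ∑ σ : Equiv.Perm (Fin (t+1)),
      ((Equiv.Perm.sign σ : ℤ) : Rx) *
        X ^ (univ.filter (fun i : Fin (t+1) => (i:ℕ) < ((σ i):ℕ))).card
      = (1 - (X:Rx)) ^ t := by
  rw [← excM_det, Matrix.det_apply]
  refine Finset.sum_congr rfl fun σ _ => ?_
  have hprod : ∏ i, excM (t+1) (σ i) i
      = X ^ (univ.filter (fun i : Fin (t+1) => (i:ℕ) < ((σ i):ℕ))).card := by
    unfold excM
    rw [Finset.prod_ite, Finset.prod_const, Finset.prod_const_one, mul_one]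
  rw [hprod, Units.smul_def, zsmul_eq_mul]


variable {N : ℕ}

def excV {N : ℕ} (σ : Equiv.Perm (Fin N)) : ℕ :=
  (univ.filter (fun k : Fin N => (k:ℕ) < ((σ k):ℕ))).card

lemma sigma_maps_T {σ : Equiv.Perm (Fin N)} {T : Finset (Fin N)}
    (hs : σ.support ⊆ T) : ∀ x : Fin N, x ∈ T ↔ x ∈ T ∧ True := by
  intro x; simp

lemma mem_iff_apply_mem {σ : Equiv.Perm (Fin N)} {T : Finset (Fin N)}
    (hs : σ.support ⊆ T) : ∀ x : Fin N, x ∈ T ↔ σ x ∈ T := by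
  intro x
  constructor
  · intro hx
    by_contra hsx
    have h1 : σ (σ x) = σ x := by
      by_contra h
      exact hsx (hs (Equiv.Perm.mem_support.2 h))
    have := σ.injective h1
    rw [this] at hsx; exact hsx hx
  · intro hsx
    by_contra hx
    have : σ x = x := by
      by_contra h
      exact hx (hs (Equiv.Perm.mem_support.2 h))
    rw [this] at hsx; exact hx hsx

lemma sum_support_subset (T : Finset (Fin N)) (hT : T.Nonempty) :
    ∑ σ ∈ univ.filter (fun σ : Equiv.Perm (Fin N) => σ.support ⊆ T),
      ((Equiv.Perm.sign σ : ℤ) : Rx) * X ^ excV σ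
      = (1 - (X:Rx)) ^ (T.card - 1) := by
  obtain ⟨t', ht⟩ : ∃ t', T.card = t' + 1 :=
    ⟨T.card - 1, (Nat.succ_pred_eq_of_pos (Finset.card_pos.2 hT)).symm⟩
  rw [ht]
  simp only [Nat.add_sub_cancel]
  rw [← sum_perm_fin t']
  set o := T.orderIsoOfFin ht with ho
  set e := o.toEquiv with he
  refine (Finset.sum_nbij (fun τ : Equiv.Perm (Fin (t'+1)) => τ.extendDomain e)
    ?_ ?_ ?_ ?_).symm
  · -- maps into filter
    intro τ _
    simp only [Finset.mem_filter, Finset.mem_univ, true_and]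
    intro k hk
    by_contra hkT
    have := Equiv.Perm.extendDomain_apply_not_subtype τ e (b := k) hkT
    exact (Equiv.Perm.mem_support.1 hk) this
  · -- InjOn
    intro τ₁ _ τ₂ _ h
    ext i
    have := congrFun (congrArg (fun (σ : Equiv.Perm (Fin N)) => (σ : Fin N → Fin N)) h) ((e i : Fin N))
    simp only at this
    rw [Equiv.Perm.extendDomain_apply_image, Equiv.Perm.extendDomain_apply_image] at this
    exact congrArg Fin.val (e.injective (Subtype.coe_injective this))
  · -- SurjOn
    intro σ hσ
    simp only [Finset.coe_filter, Set.mem_setOf_eq, Finset.mem_univ, true_and] at hσ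
    have hmem := mem_iff_apply_mem (N := N) (σ := σ) (T := T) hσ
    set τ' := σ.subtypePerm (fun x => (hmem x).symm) with hτ'
    refine ⟨e.symm.permCongr τ', by simp, ?_⟩
    refine Equiv.ext fun k => ?_
    by_cases hk : k ∈ T
    · rw [Equiv.Perm.extendDomain_apply_subtype _ e hk]
      simp only [Equiv.permCongr_apply, Equiv.symm_symm]
      simp [hτ', Equiv.Perm.subtypePerm_apply]
    · rw [Equiv.Perm.extendDomain_apply_not_subtype _ e hk]
      have : σ k = k := by
        by_contra h2
        exact hk (hσ (Equiv.Perm.mem_support.2 h2))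
      exact this.symm
  · -- values
    intro τ _
    have hsign := Equiv.Perm.sign_extendDomain τ e
    rw [hsign]
    congr 1
    congr 1
    unfold excV
    refine Finset.card_nbij (fun i => (e i : Fin N)) ?_ ?_ ?_
    · intro i hi
      simp only [Finset.coe_filter, Set.mem_setOf_eq, Finset.mem_filter, Finset.mem_univ, true_and] at hi ⊢
      rw [Equiv.Perm.extendDomain_apply_image]
      have : (e i : Fin N) < (e (τ i) : Fin N) := by
        rw [he]
        have : o i < o (τ i) := o.lt_iff_lt.2 (Fin.lt_def.2 hi)
        exact this
      exact Fin.lt_def.1 this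
    · intro i _ j _ h
      exact e.injective (Subtype.coe_injective h)
    · intro k hk
      simp only [Finset.coe_filter, Set.mem_setOf_eq, Finset.mem_univ, true_and] at hk
      have hne : τ.extendDomain e k ≠ k := by
        intro h; rw [h] at hk; omega
      have hkT : k ∈ T := by
        by_contra hkT
        exact hne (Equiv.Perm.extendDomain_apply_not_subtype τ e hkT)
      set i := e.symm ⟨k, hkT⟩ with hi
      have hek : (e i : Fin N) = k := by rw [hi]; simp
      refine ⟨i, ?_, hek⟩
      simp only [Finset.coe_filter, Set.mem_setOf_eq, Finset.mem_univ, true_and]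
      have himg : τ.extendDomain e ((e i : Fin N)) = (e (τ i) : Fin N) :=
        Equiv.Perm.extendDomain_apply_image τ e i
      rw [hek] at himg
      rw [himg] at hk
      have : (e i : Fin N) < (e (τ i) : Fin N) := by
        rw [hek]; exact Fin.lt_def.2 hk
      have : o i < o (τ i) := this
      exact Fin.lt_def.1 (o.lt_iff_lt.1 this)

/-! ## permOn machinery -/

def permFun (p : Fin N → Fin N) (T : Finset (Fin N)) : Fin N → Fin N :=
  fun k => if k ∈ T then p k else k

lemma injOn_of_image_eq {p : Fin N → Fin N} {T : Finset (Fin N)}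
    (hT : T.image p = T) : Set.InjOn p ↑T := by
  rw [← Finset.card_image_iff, hT]

lemma permFun_bijective {p : Fin N → Fin N} {T : Finset (Fin N)}
    (hT : T.image p = T) : Function.Bijective (permFun p T) := by
  rw [Fintype.bijective_iff_injective_and_card]
  refine ⟨?_, rfl⟩
  have hinj := injOn_of_image_eq hT
  have hmaps : ∀ k ∈ T, p k ∈ T := fun k hk => by
    rw [← hT]; exact Finset.mem_image_of_mem p hk
  intro a b hab
  unfold permFun at hab
  by_cases ha : a ∈ T <;> by_cases hb : b ∈ T
  · rw [if_pos ha, if_pos hb] at hab; exact hinj ha hb hab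
  · rw [if_pos ha, if_neg hb] at hab; exact absurd (hab ▸ hmaps a ha) hb
  · rw [if_neg ha, if_pos hb] at hab; exact absurd (hab ▸ (hmaps b hb)) ha
  · rw [if_neg ha, if_neg hb] at hab; exact hab

noncomputable def permOn (p : Fin N → Fin N) (T : Finset (Fin N)) : Equiv.Perm (Fin N) :=
  if h : Function.Bijective (permFun p T) then Equiv.ofBijective _ h else 1

lemma permOn_apply_mem {p : Fin N → Fin N} {T : Finset (Fin N)}
    (hT : T.image p = T) {k : Fin N} (hk : k ∈ T) : permOn p T k = p k := by
  rw [permOn, dif_pos (permFun_bijective hT)]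
  show permFun p T k = p k
  rw [permFun, if_pos hk]

lemma permOn_apply_not_mem {p : Fin N → Fin N} {T : Finset (Fin N)}
    {k : Fin N} (hk : k ∉ T) : permOn p T k = k := by
  rw [permOn]
  split
  · show permFun p T k = k
    rw [permFun, if_neg hk]
  · rfl

lemma permOn_empty (p : Fin N → Fin N) : permOn p (∅ : Finset (Fin N)) = 1 :=
  Equiv.ext fun k => permOn_apply_not_mem (Finset.notMem_empty k)

lemma support_permOn (p : Fin N → Fin N) (T : Finset (Fin N)) :
    (permOn p T).support ⊆ T := by
  intro k hk
  by_contra hkT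
  exact (Equiv.Perm.mem_support.1 hk) (permOn_apply_not_mem hkT)

lemma permOn_union {p : Fin N → Fin N} {T O : Finset (Fin N)}
    (hT : T.image p = T) (hO : O.image p = O) (hd : Disjoint T O) :
    permOn p (T ∪ O) = permOn p T * permOn p O := by
  have hTO : (T ∪ O).image p = T ∪ O := by rw [Finset.image_union, hT, hO]
  have hmapsO : ∀ k ∈ O, p k ∈ O := fun k hk => by
    rw [← hO]; exact Finset.mem_image_of_mem p hk
  refine Equiv.ext fun k => ?_
  rw [Equiv.Perm.mul_apply]
  by_cases hkO : k ∈ O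
  · have h1 : permOn p O k = p k := permOn_apply_mem hO hkO
    have h2 : p k ∉ T := fun h => (Finset.disjoint_left.1 hd) h (hmapsO k hkO)
    rw [h1, permOn_apply_not_mem h2, permOn_apply_mem hTO (Finset.mem_union_right _ hkO)]
  · rw [permOn_apply_not_mem hkO]
    by_cases hkT : k ∈ T
    · rw [permOn_apply_mem hT hkT, permOn_apply_mem hTO (Finset.mem_union_left _ hkT)]
    · rw [permOn_apply_not_mem hkT,
        permOn_apply_not_mem (by simp [hkT, hkO] : k ∉ T ∪ O)]

/-! ## orbit machinery -/

section Orbit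

variable {p : Fin N → Fin N} {x₀ : Fin N}

def orbitF (p : Fin N → Fin N) (x₀ : Fin N) : Finset (Fin N) :=
  (Finset.range (Function.minimalPeriod p x₀)).image (fun i => p^[i] x₀)

lemma mem_orbitF_iter (hx : x₀ ∈ Function.periodicPts p) (i : ℕ) :
    p^[i] x₀ ∈ orbitF p x₀ := by
  have hpos := Function.minimalPeriod_pos_of_mem_periodicPts hx
  rw [← Function.iterate_mod_minimalPeriod_eq]
  exact Finset.mem_image_of_mem _ (Finset.mem_range.2 (Nat.mod_lt _ hpos))

lemma x₀_mem_orbitF (hx : x₀ ∈ Function.periodicPts p) : x₀ ∈ orbitF p x₀ := by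
  simpa using mem_orbitF_iter hx 0

lemma orbitF_image (hx : x₀ ∈ Function.periodicPts p) :
    (orbitF p x₀).image p = orbitF p x₀ := by
  have hpos := Function.minimalPeriod_pos_of_mem_periodicPts hx
  apply Finset.Subset.antisymm
  · intro y hy
    simp only [Finset.mem_image] at hy
    obtain ⟨z, hz, rfl⟩ := hy
    simp only [orbitF, Finset.mem_image] at hz
    obtain ⟨i, _, rfl⟩ := hz
    rw [← Function.iterate_succ_apply' p i x₀]
    exact mem_orbitF_iter hx _
  · intro y hy
    simp only [orbitF, Finset.mem_image] at hy
    obtain ⟨i, _, rfl⟩ := hy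
    have key : p^[i + Function.minimalPeriod p x₀] x₀ = p^[i] x₀ := by
      rw [Function.iterate_add_apply, Function.iterate_minimalPeriod]
    have h1 : i + Function.minimalPeriod p x₀ - 1 + 1 = i + Function.minimalPeriod p x₀ := by
      omega
    rw [← key, ← h1, Function.iterate_succ_apply']
    exact Finset.mem_image_of_mem p (mem_orbitF_iter hx _)

lemma iter_eq_x₀_of_orbit (hx : x₀ ∈ Function.periodicPts p) {y : Fin N}
    (hy : y ∈ orbitF p x₀) : ∃ j : ℕ, p^[j] y = x₀ := by
  simp only [orbitF, Finset.mem_image] at hy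
  obtain ⟨i, hi, rfl⟩ := hy
  set ℓ := Function.minimalPeriod p x₀ with hℓ
  have hpos := Function.minimalPeriod_pos_of_mem_periodicPts hx
  refine ⟨ℓ * (i + 1) - i, ?_⟩
  rw [← Function.iterate_add_apply]
  have h2 : ℓ * (i+1) - i + i = ℓ * (i+1) := by
    have : i ≤ ℓ * (i+1) := by nlinarith
    omega
  rw [h2]
  exact (Function.isPeriodicPt_minimalPeriod p x₀).mul_const (i+1)

lemma p_ne_self_on_orbit (hx : x₀ ∈ Function.periodicPts p) (hne : p x₀ ≠ x₀)
    {y : Fin N} (hy : y ∈ orbitF p x₀) : p y ≠ y := by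
  intro hfix
  obtain ⟨j, hj⟩ := iter_eq_x₀_of_orbit hx hy
  rw [Function.iterate_fixed hfix] at hj
  subst hj
  exact hne hfix

lemma permOn_orbit_isCycle (hx : x₀ ∈ Function.periodicPts p) (hne : p x₀ ≠ x₀) :
    (permOn p (orbitF p x₀)).IsCycle := by
  have himg := orbitF_image hx
  refine ⟨x₀, ?_, ?_⟩
  · rw [permOn_apply_mem himg (x₀_mem_orbitF hx)]
    exact hne
  · intro y hy
    have hyO : y ∈ orbitF p x₀ := by
      by_contra hyO
      exact hy (permOn_apply_not_mem hyO)
    have hiter : ∀ j : ℕ, (permOn p (orbitF p x₀))^[j] x₀ = p^[j] x₀ := by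
      intro j
      induction j with
      | zero => rfl
      | succ j ih =>
        rw [Function.iterate_succ_apply', Function.iterate_succ_apply', ih,
          permOn_apply_mem himg (mem_orbitF_iter hx j)]
    simp only [orbitF, Finset.mem_image] at hyO
    obtain ⟨i, _, rfl⟩ := hyO
    exact ⟨(i : ℤ), by rw [zpow_natCast, ← Equiv.Perm.iterate_eq_pow, hiter]⟩

lemma support_permOn_orbit (hx : x₀ ∈ Function.periodicPts p) (hne : p x₀ ≠ x₀) :
    (permOn p (orbitF p x₀)).support = orbitF p x₀ := by
  refine Finset.Subset.antisymm (support_permOn _ _) fun y hy => ?_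
  rw [Equiv.Perm.mem_support, permOn_apply_mem (orbitF_image hx) hy]
  exact p_ne_self_on_orbit hx hne hy

lemma sign_permOn_orbit (hx : x₀ ∈ Function.periodicPts p) :
    Equiv.Perm.sign (permOn p (orbitF p x₀)) = (-1) ^ ((orbitF p x₀).card + 1) := by
  by_cases hne : p x₀ = x₀
  · have hℓ : Function.minimalPeriod p x₀ = 1 :=
      Function.minimalPeriod_eq_one_iff_isFixedPt.2 hne
    have hO : orbitF p x₀ = {x₀} := by
      simp [orbitF, hℓ]
    have : permOn p (orbitF p x₀) = 1 := by
      refine Equiv.ext fun k => ?_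
      by_cases hk : k ∈ orbitF p x₀
      · rw [permOn_apply_mem (orbitF_image hx) hk]
        rw [hO, Finset.mem_singleton] at hk
        subst hk; exact hne
      · exact permOn_apply_not_mem hk
    rw [this, hO]
    simp
  · rw [(permOn_orbit_isCycle hx hne).sign, support_permOn_orbit hx hne]
    rw [pow_succ]
    exact (mul_neg_one _).symm

end Orbit

/-! ## Claim A -/

lemma iter_mem_of_image_eq {p : Fin N → Fin N} {T : Finset (Fin N)}
    (hT : T.image p = T) {k : Fin N} (hk : k ∈ T) (m : ℕ) : p^[m] k ∈ T := by
  induction m with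
  | zero => exact hk
  | succ m ih =>
    rw [Function.iterate_succ_apply']
    rw [← hT]
    exact Finset.mem_image_of_mem p ih

lemma image_sdiff_valid {p : Fin N → Fin N} {T O : Finset (Fin N)}
    (hT : T.image p = T) (hO : O.image p = O) (hOT : O ⊆ T) :
    (T \ O).image p = T \ O := by
  have hinj := injOn_of_image_eq hT
  have hsub : (T \ O).image p ⊆ T \ O := by
    intro y hy
    simp only [Finset.mem_image] at hy
    obtain ⟨z, hz, rfl⟩ := hy
    rw [Finset.mem_sdiff] at hz ⊢
    refine ⟨by rw [← hT]; exact Finset.mem_image_of_mem p hz.1, fun hpz => ?_⟩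
    rw [← hO, Finset.mem_image] at hpz
    obtain ⟨w, hw, hw2⟩ := hpz
    have : w = z := hinj (hOT hw) hz.1 hw2
    exact hz.2 (this ▸ hw)
  refine Finset.eq_of_subset_of_card_le hsub ?_
  rw [Finset.card_image_of_injOn (hinj.mono (fun y hy => (Finset.mem_coe.1 (Finset.mem_sdiff.1 (Finset.mem_coe.2 hy)).1)))]

def wA (p : Fin N → Fin N) (T : Finset (Fin N)) : Rx :=
  ((-1 : Rx)) ^ T.card * ((Equiv.Perm.sign (permOn p T) : ℤ) : Rx)

lemma wA_union {p : Fin N → Fin N} {T O : Finset (Fin N)}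
    (hT : T.image p = T) (hO : O.image p = O) (hd : Disjoint T O)
    (hsign : Equiv.Perm.sign (permOn p O) = (-1) ^ (O.card + 1)) :
    wA p (T ∪ O) = - wA p T := by
  unfold wA
  rw [permOn_union hT hO hd, Finset.card_union_of_disjoint hd, map_mul, hsign]
  push_cast
  set s : Rx := ((Equiv.Perm.sign (permOn p T) : ℤ) : Rx) with hs2
  have h2 : ((-1:Rx)) ^ O.card * (-1) ^ O.card = 1 := by
    rw [← pow_add, ← two_mul, pow_mul]; norm_num
  rw [pow_add, pow_succ]
  linear_combination (-(((-1:Rx)) ^ T.card * s)) * h2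

lemma claimA {n : ℕ} (p : Fin (n+1) → Fin (n+1)) (hp0 : p 0 = 0) :
    ∑ T ∈ (Finset.univ.erase (0 : Fin (n+1))).powerset.filter (fun T => T.image p = T),
      wA p T = if IsForest p then 1 else 0 := by
  by_cases hf : IsForest p
  · rw [if_pos hf]
    have hset : (Finset.univ.erase (0 : Fin (n+1))).powerset.filter
        (fun T => T.image p = T) = {∅} := by
      apply Finset.Subset.antisymm
      · intro T hT
        rw [Finset.mem_filter, Finset.mem_powerset] at hT
        rw [Finset.mem_singleton]
        by_contra hne
        obtain ⟨k, hk⟩ := Finset.nonempty_iff_ne_empty.2 hne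
        obtain ⟨m, hm⟩ := hf.2 k
        have := iter_mem_of_image_eq hT.2 hk m
        rw [hm] at this
        exact (Finset.mem_erase.1 (hT.1 this)).1 rfl
      · intro T hT
        rw [Finset.mem_singleton] at hT
        subst hT
        simp
    rw [hset, Finset.sum_singleton]
    unfold wA
    rw [permOn_empty]
    simp
  · rw [if_neg hf]
    -- find a periodic point x₀ ≠ 0
    have hex : ∃ k : Fin (n+1), ∀ m : ℕ, p^[m] k ≠ 0 := by
      by_contra h
      push_neg at h
      exact hf ⟨hp0, fun k => h k⟩
    obtain ⟨k, hk⟩ := hex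
    obtain ⟨i, j, hij, hfij⟩ := Fintype.exists_ne_map_eq_of_card_lt
      (fun i : Fin (n+2) => p^[(i:ℕ)] k) (by simp)
    wlog hlt : (i:ℕ) < (j:ℕ) generalizing i j
    · exact this j i hij.symm hfij.symm (by omega)
    set x₀ := p^[(i:ℕ)] k with hx₀
    have hper : Function.IsPeriodicPt p ((j:ℕ) - (i:ℕ)) x₀ := by
      show p^[(j:ℕ)-(i:ℕ)] x₀ = x₀
      rw [hx₀, ← Function.iterate_add_apply]
      rw [show (j:ℕ) - (i:ℕ) + (i:ℕ) = (j:ℕ) by omega]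
      exact hfij.symm
    have hx : x₀ ∈ Function.periodicPts p :=
      Function.mk_mem_periodicPts (by omega) hper
    have hx0 : x₀ ≠ 0 := hk (i:ℕ)
    set O := orbitF p x₀ with hO
    have himgO : O.image p = O := orbitF_image hx
    have h0O : (0 : Fin (n+1)) ∉ O := by
      intro h0
      obtain ⟨j', hj'⟩ := iter_eq_x₀_of_orbit hx h0
      rw [Function.iterate_fixed hp0] at hj'
      exact hx0 hj'.symm
    have hsignO : Equiv.Perm.sign (permOn p O) = (-1) ^ (O.card + 1) :=
      sign_permOn_orbit hx
    have hx₀O : x₀ ∈ O := x₀_mem_orbitF hx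
    -- the involution
    refine Finset.sum_involution
      (fun T _ => if x₀ ∈ T then T \ O else T ∪ O) ?_ ?_ ?_ ?_
    · -- sums to zero
      intro T hT
      rw [Finset.mem_filter, Finset.mem_powerset] at hT
      by_cases hxT : x₀ ∈ T
      · rw [if_pos hxT]
        have hOT : O ⊆ T := by
          intro y hy
          simp only [hO, orbitF, Finset.mem_image] at hy
          obtain ⟨i', _, rfl⟩ := hy
          exact iter_mem_of_image_eq hT.2 hxT i'
        have himg' : (T \ O).image p = T \ O := image_sdiff_valid hT.2 himgO hOT
        have hd : Disjoint (T \ O) O := Finset.sdiff_disjoint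
        have hu : (T \ O) ∪ O = T := Finset.sdiff_union_of_subset hOT
        have := wA_union himg' himgO hd hsignO
        rw [hu] at this
        rw [this]; ring
      · rw [if_neg hxT]
        have hd : Disjoint T O := by
          rw [Finset.disjoint_left]
          intro y hyT hyO
          obtain ⟨j', hj'⟩ := iter_eq_x₀_of_orbit hx hyO
          exact hxT (hj' ▸ iter_mem_of_image_eq hT.2 hyT j')
        rw [wA_union hT.2 himgO hd hsignO]; ring
    · -- g a ≠ a
      intro T hT _
      by_cases hxT : x₀ ∈ T
      · rw [if_pos hxT]
        intro h
        rw [← h] at hxT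
        exact (Finset.mem_sdiff.1 hxT).2 hx₀O
      · rw [if_neg hxT]
        intro h
        rw [← h] at hxT
        exact hxT (Finset.mem_union_right _ hx₀O)
    · -- g maps into the set
      intro T hT
      rw [Finset.mem_filter, Finset.mem_powerset] at hT
      by_cases hxT : x₀ ∈ T
      · rw [if_pos hxT]
        have hOT : O ⊆ T := by
          intro y hy
          simp only [hO, orbitF, Finset.mem_image] at hy
          obtain ⟨i', _, rfl⟩ := hy
          exact iter_mem_of_image_eq hT.2 hxT i'
        rw [Finset.mem_filter, Finset.mem_powerset]
        exact ⟨(Finset.sdiff_subset).trans hT.1, image_sdiff_valid hT.2 himgO hOT⟩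
      · rw [if_neg hxT]
        rw [Finset.mem_filter, Finset.mem_powerset]
        constructor
        · intro y hy
          rcases Finset.mem_union.1 hy with h | h
          · exact hT.1 h
          · rw [Finset.mem_erase]
            exact ⟨fun h0 => h0O (h0 ▸ h), Finset.mem_univ y⟩
        · rw [Finset.image_union, hT.2, himgO]
    · -- involution
      intro T hT
      by_cases hxT : x₀ ∈ T
      · rw [if_pos hxT]
        rw [if_neg (fun h => (Finset.mem_sdiff.1 h).2 hx₀O)]
        apply Finset.sdiff_union_of_subset
        intro y hy
        rw [Finset.mem_filter, Finset.mem_powerset] at hT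
        simp only [hO, orbitF, Finset.mem_image] at hy
        obtain ⟨i', _, rfl⟩ := hy
        exact iter_mem_of_image_eq hT.2 hxT i'
      · rw [if_neg hxT]
        rw [if_pos (Finset.mem_union_right _ hx₀O)]
        rw [Finset.union_sdiff_cancel_right]
        rw [Finset.disjoint_left]
        intro y hyT hyO
        rw [Finset.mem_filter, Finset.mem_powerset] at hT
        obtain ⟨j', hj'⟩ := iter_eq_x₀_of_orbit hx hyO
        exact hxT (hj' ▸ iter_mem_of_image_eq hT.2 hyT j')

/-! ## Master sum -/

section Main
variable (n : ℕ)

def C0 : Finset (Fin (n+1)) := Finset.univ.erase 0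

def P0 : Finset (Fin (n+1) → Fin (n+1)) :=
  Fintype.piFinset (fun k => if k = 0 then ({0} : Finset (Fin (n+1))) else Finset.univ)

def wgt (k v : Fin (n+1)) : Rx := if (k:ℕ) < (v:ℕ) then X else 1

def fV (k : Fin (n+1)) : Rx := ∑ v : Fin (n+1), wgt n k v

def FZ (j : ℕ) : Rx := Polynomial.C ((n:ℤ) - j) * X + Polynomial.C ((j:ℤ) + 1)

def Master : Rx :=
  ∑ T ∈ (C0 n).powerset, ∑ σ : Equiv.Perm (Fin (n+1)), ∑ p ∈ P0 n,
    if σ.support ⊆ T ∧ (∀ k ∈ T, p k = σ k) then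
      ((-1:Rx))^T.card * ((Equiv.Perm.sign σ : ℤ):Rx) * X ^ numDescending n p else 0

variable {n}

lemma mem_P0 {p : Fin (n+1) → Fin (n+1)} : p ∈ P0 n ↔ p 0 = 0 := by
  rw [P0, Fintype.mem_piFinset]
  constructor
  · intro h
    have := h 0
    rwa [if_pos rfl, Finset.mem_singleton] at this
  · intro h k
    by_cases hk : k = 0
    · subst hk; rw [if_pos rfl, Finset.mem_singleton]; exact h
    · rw [if_neg hk]; exact Finset.mem_univ _

open Fin.NatCast in
lemma desc_card {p : Fin (n+1) → Fin (n+1)} (hp0 : p 0 = 0) :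
    numDescending n p
      = (Finset.univ.filter (fun k : Fin (n+1) => (k:ℕ) < ((p k):ℕ))).card := by
  unfold numDescending
  refine Finset.card_nbij (fun k : ℕ => (k : Fin (n+1))) ?_ ?_ ?_
  · intro k hk
    simp only [Finset.mem_coe] at hk ⊢
    rw [Finset.mem_filter] at hk ⊢
    obtain ⟨hk1, hk2⟩ := hk
    rw [Finset.mem_Icc] at hk1
    have hlt : k < n + 1 := by omega
    refine ⟨Finset.mem_univ _, ?_⟩
    rwa [Fin.val_cast_of_lt hlt]
  · intro k hk k' hk' h
    simp only [Finset.coe_filter, Set.mem_setOf_eq, Finset.mem_Icc] at hk hk'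
    have h1 : k < n + 1 := by omega
    have h2 : k' < n + 1 := by omega
    have := congrArg Fin.val h
    rwa [Fin.val_cast_of_lt h1, Fin.val_cast_of_lt h2] at this
  · intro j hj
    simp only [Finset.coe_filter, Set.mem_setOf_eq, Finset.mem_univ, true_and] at hj
    refine ⟨(j : ℕ), ?_, ?_⟩
    · simp only [Finset.coe_filter, Set.mem_setOf_eq, Finset.mem_Icc]
      have hj0 : j ≠ 0 := by
        intro h
        rw [h, hp0] at hj
        simp at hj
      have : ((j:ℕ) : Fin (n+1)) = j := Fin.cast_val_eq_self j
      rw [this]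
      refine ⟨⟨?_, ?_⟩, hj⟩
      · have : (j:ℕ) ≠ 0 := fun h => hj0 (by ext; simp [h])
        omega
      · exact Nat.lt_succ_iff.1 j.isLt
    · exact Fin.cast_val_eq_self j

lemma desc_prod {p : Fin (n+1) → Fin (n+1)} (hp0 : p 0 = 0) :
    (X:Rx) ^ numDescending n p = ∏ k : Fin (n+1), wgt n k (p k) := by
  unfold wgt
  rw [Finset.prod_ite, Finset.prod_const, Finset.prod_const_one, mul_one, desc_card hp0]

lemma fV_eq (k : Fin (n+1)) : fV n k = FZ n (k:ℕ) := by
  unfold fV wgt FZ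
  rw [Finset.sum_ite, Finset.sum_const, Finset.sum_const]
  have h1 : Finset.univ.filter (fun v : Fin (n+1) => (k:ℕ) < (v:ℕ)) = Finset.Ioi k := by
    ext v
    rw [Finset.mem_filter, Finset.mem_Ioi]
    simp only [Finset.mem_univ, true_and]
    exact (Fin.lt_def).symm
  have h2 : Finset.univ.filter (fun v : Fin (n+1) => ¬ (k:ℕ) < (v:ℕ)) = Finset.Iic k := by
    ext v
    simp only [Finset.mem_filter, Finset.mem_univ, true_and, Finset.mem_Iic, Fin.le_def]
    omega
  rw [h1, h2, Fin.card_Ioi, Fin.card_Iic]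
  have hkn : (k:ℕ) ≤ n := Nat.lt_succ_iff.1 k.isLt
  rw [nsmul_eq_mul, nsmul_eq_mul, mul_one]
  have hc1 : ((n + 1 - 1 - (k:ℕ) : ℕ) : Rx) = Polynomial.C ((n:ℤ) - (k:ℕ)) := by
    rw [show n + 1 - 1 - (k:ℕ) = n - (k:ℕ) by omega, map_sub, map_natCast, map_natCast,
      Nat.cast_sub hkn]
  have hc2 : (((k:ℕ) + 1 : ℕ) : Rx) = Polynomial.C (((k:ℕ):ℤ) + 1) := by
    rw [map_add, map_natCast, map_one, Nat.cast_add, Nat.cast_one]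
  rw [hc1, hc2]

lemma image_eq_of_support_subset {σ : Equiv.Perm (Fin (n+1))} {T : Finset (Fin (n+1))}
    (hs : σ.support ⊆ T) : T.image σ = T := by
  have hsub : T.image σ ⊆ T := by
    intro y hy
    rw [Finset.mem_image] at hy
    obtain ⟨z, hz, rfl⟩ := hy
    exact (mem_iff_apply_mem hs z).1 hz
  refine Finset.eq_of_subset_of_card_le hsub ?_
  rw [Finset.card_image_of_injOn (σ.injective.injOn)]

lemma sigma_sum (p : Fin (n+1) → Fin (n+1)) (T : Finset (Fin (n+1))) (d : ℕ) :
    (∑ σ : Equiv.Perm (Fin (n+1)),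
      if σ.support ⊆ T ∧ (∀ k ∈ T, p k = σ k) then
        ((-1:Rx))^T.card * ((Equiv.Perm.sign σ : ℤ):Rx) * (X:Rx) ^ d else 0)
      = if T.image p = T then wA p T * (X:Rx) ^ d else 0 := by
  by_cases hv : T.image p = T
  · rw [if_pos hv]
    rw [Finset.sum_eq_single (permOn p T)]
    · rw [if_pos ⟨support_permOn p T, fun k hk => (permOn_apply_mem hv hk).symm⟩]
      unfold wA
      ring
    · intro σ _ hσne
      rw [if_neg]
      rintro ⟨h1, h2⟩
      apply hσne
      refine Equiv.ext fun k => ?_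
      by_cases hk : k ∈ T
      · rw [← h2 k hk, permOn_apply_mem hv hk]
      · rw [permOn_apply_not_mem hk]
        by_contra hne
        exact hk (h1 (Equiv.Perm.mem_support.2 hne))
    · intro h
      exact absurd (Finset.mem_univ _) h
  · rw [if_neg hv]
    apply Finset.sum_eq_zero
    intro σ _
    rw [if_neg]
    rintro ⟨h1, h2⟩
    apply hv
    rw [show T.image p = T.image σ from Finset.image_congr (fun k hk => h2 k hk)]
    exact image_eq_of_support_subset h1

lemma masterA (n : ℕ) : Master n = ∑ p ∈ forestFinset n, (X:Rx) ^ numDescending n p := by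
  have e1 : Master n = ∑ p ∈ P0 n, ∑ T ∈ (C0 n).powerset,
      ∑ σ : Equiv.Perm (Fin (n+1)),
        if σ.support ⊆ T ∧ (∀ k ∈ T, p k = σ k) then
          ((-1:Rx))^T.card * ((Equiv.Perm.sign σ : ℤ):Rx) * X ^ numDescending n p else 0 := by
    unfold Master
    exact (Finset.sum_congr rfl (fun T _ => Finset.sum_comm)).trans Finset.sum_comm
  rw [e1]
  have hswap : ∀ p ∈ P0 n,
      (∑ T ∈ (C0 n).powerset, ∑ σ : Equiv.Perm (Fin (n+1)),
        if σ.support ⊆ T ∧ (∀ k ∈ T, p k = σ k) then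
          ((-1:Rx))^T.card * ((Equiv.Perm.sign σ : ℤ):Rx) * X ^ numDescending n p else 0)
      = (if IsForest p then 1 else 0) * (X:Rx) ^ numDescending n p := by
    intro p hp
    have hp0 : p 0 = 0 := mem_P0.1 hp
    have h1 : ∀ T ∈ (C0 n).powerset,
        (∑ σ : Equiv.Perm (Fin (n+1)),
          if σ.support ⊆ T ∧ (∀ k ∈ T, p k = σ k) then
            ((-1:Rx))^T.card * ((Equiv.Perm.sign σ : ℤ):Rx) * X ^ numDescending n p else 0)
        = if T.image p = T then wA p T * (X:Rx) ^ numDescending n p else 0 :=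
      fun T _ => sigma_sum p T _
    rw [Finset.sum_congr rfl h1, ← Finset.sum_filter, ← Finset.sum_mul]
    rw [show (C0 n).powerset = (Finset.univ.erase (0 : Fin (n+1))).powerset from rfl]
    rw [claimA p hp0]
  refine (Finset.sum_congr rfl hswap).trans ?_
  have e2 : ∑ p ∈ P0 n, (if IsForest p then 1 else 0) * (X:Rx) ^ numDescending n p
      = ∑ p ∈ (P0 n).filter IsForest, (X:Rx) ^ numDescending n p := by
    rw [Finset.sum_filter]
    exact Finset.sum_congr rfl fun p _ => by
      by_cases h : IsForest p <;> simp [h]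
  rw [e2]
  apply Finset.sum_congr _ fun _ _ => rfl
  ext p
  rw [Finset.mem_filter, forestFinset, Set.Finite.mem_toFinset, Set.mem_setOf_eq,
    mem_P0]
  constructor
  · exact fun h => h.2
  · exact fun h => ⟨h.1, h⟩

lemma p_sum {T : Finset (Fin (n+1))} (hT : T ⊆ C0 n) (σ : Equiv.Perm (Fin (n+1)))
    (hs : σ.support ⊆ T) :
    (∑ p ∈ P0 n, if (∀ k ∈ T, p k = σ k) then (X:Rx) ^ numDescending n p else 0)
      = (X:Rx) ^ excV σ * ∏ k ∈ C0 n \ T, fV n k := by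
  classical
  have hT0 : (0 : Fin (n+1)) ∉ T := fun h => (Finset.mem_erase.1 (hT h)).1 rfl
  set t' : Fin (n+1) → Finset (Fin (n+1)) :=
    fun k => if k = 0 then {0} else if k ∈ T then {σ k} else Finset.univ with ht'
  have ht'0 : t' 0 = {0} := by simp only [ht', if_pos rfl]
  have ht'T : ∀ k ∈ T, t' k = {σ k} := by
    intro k hk
    have hk0 : k ≠ 0 := fun h0 => hT0 (h0 ▸ hk)
    simp only [ht', if_neg hk0, if_pos hk]
  have ht'o : ∀ k : Fin (n+1), k ≠ 0 → k ∉ T → t' k = Finset.univ := by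
    intro k h1 h2
    simp only [ht', if_neg h1, if_neg h2]
  have filt : (P0 n).filter (fun p => ∀ k ∈ T, p k = σ k) = Fintype.piFinset t' := by
    ext p
    rw [Finset.mem_filter, Fintype.mem_piFinset, mem_P0]
    constructor
    · rintro ⟨hp0, hag⟩ k
      by_cases hk0 : k = 0
      · subst hk0; rw [ht'0, Finset.mem_singleton]; exact hp0
      · by_cases hkT : k ∈ T
        · rw [ht'T k hkT, Finset.mem_singleton]; exact hag k hkT
        · rw [ht'o k hk0 hkT]; exact Finset.mem_univ _
    · intro h
      constructor
      · have := h 0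
        rwa [ht'0, Finset.mem_singleton] at this
      · intro k hk
        have := h k
        rwa [ht'T k hk, Finset.mem_singleton] at this
  have hp0mem : ∀ p ∈ Fintype.piFinset t', p 0 = 0 := by
    intro p hp
    have := (Fintype.mem_piFinset.1 hp) 0
    rwa [ht'0, Finset.mem_singleton] at this
  rw [← Finset.sum_filter, filt]
  rw [Finset.sum_congr rfl (fun p hp => desc_prod (hp0mem p hp))]
  rw [← Finset.prod_univ_sum]
  have hval : ∀ k : Fin (n+1), (∑ v ∈ t' k, wgt n k v)
      = if k = 0 then 1 else if k ∈ T then wgt n k (σ k) else fV n k := by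
    intro k
    by_cases hk0 : k = 0
    · subst hk0
      rw [ht'0, if_pos rfl, Finset.sum_singleton]
      unfold wgt
      rw [if_neg (lt_irrefl _)]
    · rw [if_neg hk0]
      by_cases hkT : k ∈ T
      · rw [ht'T k hkT, if_pos hkT, Finset.sum_singleton]
      · rw [ht'o k hk0 hkT, if_neg hkT]
        rfl
  rw [Finset.prod_congr rfl (fun k _ => hval k)]
  have h0univ : (0 : Fin (n+1)) ∈ (Finset.univ : Finset (Fin (n+1))) := Finset.mem_univ _
  rw [← Finset.mul_prod_erase Finset.univ _ h0univ, if_pos rfl, one_mul]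
  have herase : ∀ k ∈ (Finset.univ.erase (0 : Fin (n+1))),
      (if k = 0 then (1:Rx) else if k ∈ T then wgt n k (σ k) else fV n k)
        = if k ∈ T then wgt n k (σ k) else fV n k := by
    intro k hk
    rw [if_neg (Finset.mem_erase.1 hk).1]
  rw [Finset.prod_congr rfl herase]
  have hsplit : ∏ k ∈ (Finset.univ.erase (0 : Fin (n+1))),
      (if k ∈ T then wgt n k (σ k) else fV n k)
      = (∏ k ∈ C0 n \ T, (if k ∈ T then wgt n k (σ k) else fV n k))
        * ∏ k ∈ T, (if k ∈ T then wgt n k (σ k) else fV n k) :=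
    (Finset.prod_sdiff hT).symm
  rw [hsplit]
  have e1 : ∏ k ∈ C0 n \ T, (if k ∈ T then wgt n k (σ k) else fV n k)
      = ∏ k ∈ C0 n \ T, fV n k :=
    Finset.prod_congr rfl fun k hk => if_neg (Finset.mem_sdiff.1 hk).2
  have e2 : ∏ k ∈ T, (if k ∈ T then wgt n k (σ k) else fV n k)
      = ∏ k ∈ T, wgt n k (σ k) :=
    Finset.prod_congr rfl fun k hk => if_pos hk
  rw [e1, e2]
  have e3 : ∏ k ∈ T, wgt n k (σ k) = ∏ k : Fin (n+1), wgt n k (σ k) := by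
    refine Finset.prod_subset (Finset.subset_univ T) ?_
    intro k _ hkT
    have : σ k = k := by
      by_contra h
      exact hkT (hs (Equiv.Perm.mem_support.2 h))
    rw [this]
    unfold wgt
    rw [if_neg (lt_irrefl _)]
  have e4 : ∏ k : Fin (n+1), wgt n k (σ k) = (X:Rx) ^ excV σ := by
    unfold wgt excV
    rw [Finset.prod_ite, Finset.prod_const, Finset.prod_const_one, mul_one]
  rw [e3, e4, mul_comm]

lemma Gval (T : Finset (Fin (n+1))) :
    (∑ σ ∈ Finset.univ.filter (fun σ : Equiv.Perm (Fin (n+1)) => σ.support ⊆ T),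
      ((Equiv.Perm.sign σ : ℤ) : Rx) * X ^ excV σ)
      = (1 - (X:Rx)) ^ (T.card - 1) := by
  by_cases hT : T.Nonempty
  · exact sum_support_subset T hT
  · rw [Finset.not_nonempty_iff_eq_empty] at hT
    subst hT
    have hfilt : Finset.univ.filter
        (fun σ : Equiv.Perm (Fin (n+1)) => σ.support ⊆ (∅ : Finset (Fin (n+1)))) = {1} := by
      ext σ
      rw [Finset.mem_filter, Finset.mem_singleton]
      constructor
      · rintro ⟨_, h⟩
        exact Equiv.Perm.support_eq_empty_iff.1 (Finset.subset_empty.1 h)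
      · rintro rfl
        refine ⟨Finset.mem_univ _, ?_⟩
        rw [Equiv.Perm.support_one]
      
    rw [hfilt, Finset.sum_singleton]
    have : excV (1 : Equiv.Perm (Fin (n+1))) = 0 := by
      unfold excV
      rw [Finset.card_eq_zero]
      ext k
      simp
    rw [this]
    simp

lemma masterB (n : ℕ) : Master n = ∑ T ∈ (C0 n).powerset,
    ((-1:Rx))^T.card * ((1 - (X:Rx)) ^ (T.card - 1) * ∏ k ∈ C0 n \ T, fV n k) := by
  unfold Master
  refine Finset.sum_congr rfl fun T hT => ?_
  rw [Finset.mem_powerset] at hT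
  have step1 : ∀ σ : Equiv.Perm (Fin (n+1)),
      (∑ p ∈ P0 n, if σ.support ⊆ T ∧ (∀ k ∈ T, p k = σ k) then
        ((-1:Rx))^T.card * ((Equiv.Perm.sign σ : ℤ):Rx) * X ^ numDescending n p else 0)
      = if σ.support ⊆ T then
          ((-1:Rx))^T.card * ((Equiv.Perm.sign σ : ℤ):Rx)
            * ((X:Rx) ^ excV σ * ∏ k ∈ C0 n \ T, fV n k) else 0 := by
    intro σ
    by_cases hσ : σ.support ⊆ T
    · rw [if_pos hσ, ← p_sum hT σ hσ, Finset.mul_sum]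
      refine Finset.sum_congr rfl fun p _ => ?_
      by_cases hag : ∀ k ∈ T, p k = σ k
      · rw [if_pos ⟨hσ, hag⟩, if_pos hag]
      · rw [if_neg (fun h => hag h.2), if_neg hag, mul_zero]
    · rw [if_neg hσ]
      exact Finset.sum_eq_zero fun p _ => if_neg (fun h => hσ h.1)
  rw [Finset.sum_congr rfl (fun σ _ => step1 σ)]
  rw [← Finset.sum_filter]
  rw [← Gval T, Finset.sum_mul, Finset.mul_sum]
  refine Finset.sum_congr rfl fun σ _ => ?_
  ring

lemma prod_C0_transfer (g : ℕ → Rx) : ∏ k ∈ C0 n, g (k:ℕ) = ∏ j ∈ Finset.Icc 1 n, g j := by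
  refine Finset.prod_nbij (fun k : Fin (n+1) => (k:ℕ)) ?_ ?_ ?_ (fun _ _ => rfl)
  · intro k hk
    rw [C0, Finset.mem_erase] at hk
    rw [Finset.mem_Icc]
    have h0 : (k:ℕ) ≠ 0 := fun h => hk.1 (by ext; simp [h])
    exact ⟨Nat.pos_of_ne_zero h0, Nat.lt_succ_iff.1 k.isLt⟩
  · intro k _ k' _ h
    exact Fin.val_injective h
  · intro j hj
    simp only [Finset.coe_Icc, Set.mem_Icc] at hj
    refine ⟨⟨j, by omega⟩, ?_, rfl⟩
    rw [Finset.mem_coe, C0, Finset.mem_erase]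
    refine ⟨?_, Finset.mem_univ _⟩
    intro hh
    rw [Fin.ext_iff] at hh
    simp only [Fin.val_zero] at hh
    omega

lemma one_sub_X_ne : (1 - (X:Rx)) ≠ 0 := by
  intro h
  have : (X:Rx) = Polynomial.C 1 := by
    rw [map_one]
    linear_combination -h
  exact Polynomial.X_ne_C 1 this

lemma master_eq (n : ℕ) (hn : 1 ≤ n) :
    Master n = ∏ j ∈ Finset.Icc 1 (n-1), FZ n j := by
  set PE : Rx := ∏ k ∈ C0 n, fV n k with hPE
  set AZ : Rx := ∏ k ∈ C0 n, (fV n k + ((X:Rx) - 1)) with hAZ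
  have key1 : (1 - (X:Rx)) * Master n = AZ - X * PE := by
    rw [masterB, Finset.mul_sum]
    have hAZsum : AZ = ∑ T ∈ (C0 n).powerset,
        ((X:Rx)-1)^T.card * ∏ k ∈ C0 n \ T, fV n k := by
      rw [hAZ]
      rw [Finset.prod_congr rfl (fun k _ => add_comm (fV n k) ((X:Rx)-1))]
      rw [Finset.prod_add]
      exact Finset.sum_congr rfl fun T _ => by rw [Finset.prod_const]
    rw [eq_sub_iff_add_eq, hAZsum]
    have hterm : ∀ T ∈ (C0 n).powerset,
        (1 - (X:Rx)) * (((-1:Rx))^T.card * ((1 - (X:Rx)) ^ (T.card - 1)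
            * ∏ k ∈ C0 n \ T, fV n k)) + X * (if T = ∅ then PE else 0)
          = ((X:Rx)-1)^T.card * ∏ k ∈ C0 n \ T, fV n k := by
      intro T _
      by_cases hTe : T = ∅
      · subst hTe
        rw [if_pos rfl]
        simp only [Finset.card_empty, pow_zero, one_mul, Finset.sdiff_empty]
        rw [hPE]
        ring
      · rw [if_neg hTe]
        have ht1 : 1 ≤ T.card := Finset.card_pos.2 (Finset.nonempty_iff_ne_empty.2 hTe)
        have hpow : (1 - (X:Rx)) * (1 - (X:Rx)) ^ (T.card - 1) = (1 - (X:Rx)) ^ T.card := by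
          rw [← pow_succ']
          congr 1
          omega
        have hneg : ((-1:Rx))^T.card * (1 - (X:Rx))^T.card = ((X:Rx)-1)^T.card := by
          rw [← mul_pow]
          congr 1
          ring
        rw [mul_zero, add_zero]
        linear_combination (((-1:Rx))^T.card * (∏ k ∈ C0 n \ T, fV n k)) * hpow
          + (∏ k ∈ C0 n \ T, fV n k) * hneg
    rw [← Finset.sum_congr rfl hterm, Finset.sum_add_distrib]
    congr 1
    have hps : ∀ T ∈ (C0 n).powerset, (X:Rx) * (if T = ∅ then PE else 0)
        = if T = ∅ then X * PE else 0 := fun T _ => by rw [mul_ite, mul_zero]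
    rw [Finset.sum_congr rfl hps, Finset.sum_ite_eq' _ ∅ (fun _ => (X:Rx) * PE),
      if_pos (Finset.empty_mem_powerset _)]
  -- convert products to ℕ
  have hPE' : PE = ∏ j ∈ Finset.Icc 1 n, FZ n j := by
    rw [hPE, Finset.prod_congr rfl (fun k _ => fV_eq k), prod_C0_transfer]
  have hAZ' : AZ = ∏ j ∈ Finset.Icc 1 n, (FZ n j + ((X:Rx) - 1)) := by
    rw [hAZ, Finset.prod_congr rfl (fun k _ => by rw [fV_eq k]),
      prod_C0_transfer (fun j => FZ n j + ((X:Rx) - 1))]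
  -- peel products
  have h1mem : 1 ∈ Finset.Icc 1 n := by rw [Finset.mem_Icc]; omega
  have hnmem : n ∈ Finset.Icc 1 n := by rw [Finset.mem_Icc]; omega
  have herase1 : (Finset.Icc 1 n).erase 1 = Finset.Icc 2 n := by
    ext j
    rw [Finset.mem_erase, Finset.mem_Icc, Finset.mem_Icc]
    omega
  have herasen : (Finset.Icc 1 n).erase n = Finset.Icc 1 (n-1) := by
    ext j
    rw [Finset.mem_erase, Finset.mem_Icc, Finset.mem_Icc]
    omega
  have hPE2 : PE = Polynomial.C ((n:ℤ)+1) * ∏ j ∈ Finset.Icc 1 (n-1), FZ n j := by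
    rw [hPE', ← Finset.mul_prod_erase _ _ hnmem, herasen]
    congr 1
    unfold FZ
    rw [sub_self, map_zero, zero_mul, zero_add]
  have hAZ2 : AZ = (Polynomial.C ((n:ℤ)) * X + 1) * ∏ j ∈ Finset.Icc 1 (n-1), FZ n j := by
    rw [hAZ', ← Finset.mul_prod_erase _ _ h1mem, herase1]
    have hshift : ∏ j ∈ Finset.Icc 2 n, (FZ n j + ((X:Rx) - 1))
        = ∏ j ∈ Finset.Icc 1 (n-1), FZ n j := by
      refine (Finset.prod_nbij (fun j => j + 1) ?_ ?_ ?_ ?_).symm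
      · intro j hj
        rw [Finset.mem_Icc] at hj
        rw [Finset.mem_Icc]
        omega
      · intro a _ b _ h
        dsimp only at h
        omega
      · intro j hj
        simp only [Finset.coe_Icc, Set.mem_Icc] at hj
        refine ⟨j - 1, ?_, by dsimp only; omega⟩
        simp only [Finset.coe_Icc, Set.mem_Icc]
        omega
      · intro j hj
        unfold FZ
        push_cast
        simp only [map_sub, map_add, map_one, map_ofNat]
        ring
    rw [hshift]
    congr 1
    unfold FZ
    push_cast
    simp only [map_sub, map_add, map_one, map_ofNat]
    ring
  have key2 : AZ - X * PE = (1 - (X:Rx)) * ∏ j ∈ Finset.Icc 1 (n-1), FZ n j := by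
    rw [hPE2, hAZ2]
    simp only [map_add, map_one]
    ring
  apply mul_left_cancel₀ one_sub_X_ne
  rw [key1, key2]

end Main

theorem stmt9 (n : ℕ) (hn : 1 ≤ n) (a : ℤ) :
    ∑ p ∈ forestFinset n, a ^ numDescending n p =
      ∏ k ∈ Finset.Icc 1 (n - 1), (((n : ℤ) - k) * a + k + 1) := by
  have key : ∑ p ∈ forestFinset n, (X:Rx) ^ numDescending n p
      = ∏ j ∈ Finset.Icc 1 (n-1), FZ n j := by
    rw [← masterA, master_eq n hn]
  have l1 : ∀ p ∈ forestFinset n,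
      Polynomial.eval a ((X:Rx) ^ numDescending n p) = a ^ numDescending n p :=
    fun p _ => by rw [Polynomial.eval_pow, Polynomial.eval_X]
  have l2 : ∀ j ∈ Finset.Icc 1 (n-1),
      Polynomial.eval a (FZ n j) = ((n:ℤ) - j) * a + j + 1 := by
    intro j _
    unfold FZ
    rw [Polynomial.eval_add, Polynomial.eval_mul, Polynomial.eval_C, Polynomial.eval_X,
      Polynomial.eval_C]
    ring
  rw [← Finset.sum_congr rfl l1, ← Finset.prod_congr rfl l2, ← Polynomial.eval_finset_sum,
    ← Polynomial.eval_prod, key]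
end
end
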